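/- arXiv:2202.05194 — 9 statements merged into one kernel-verified Lean document; each statement's English description precedes it below -/
import Mathlib

section
/- Suppose x ∈ ℝ_{≥0}^{n×m} is an allocation with u_i := Σ_j v_{ij} x_{ij} − d_i > 0 for every buyer i, and p ∈ ℝ_{≥0}^m is a price vector such that: (a) for all i, j, B_i · v_{ij}/u_i ≤ p_j, with equality whenever x_{ij} > 0; and (b) p_j > 0 implies Σ_i x_{ij} = 1. Then (x, p) is a market equilibrium with demand-inflated budgets: for every buyer i and every bundle y ∈ ℝ_{≥0}^m with Σ_j v_{ij} y_j − d_i > 0 and Σ_j p_j y_j ≤ B_i · (1 + d_i/(Σ_j v_{ij} y_j − d_i)), we have Σ_j v_{ij} y_j − d_i ≤ u_i; and every item with positive price is fully allocated. -/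
open Finset

/-- A solution of the KKT conditions of the Eisenberg–Gale program with demands
is a market equilibrium with demand-inflated budgets: every buyer gets a bundle
from their (demand-inflated-budget) demand set, and every item with positive
price is fully allocated. -/
theorem eg_demand_market_equilibrium
    (n m : ℕ) (v : Fin n → Fin m → ℝ) (B d : Fin n → ℝ)
    (x : Fin n → Fin m → ℝ) (p : Fin m → ℝ)
    (hv : ∀ i j, 0 ≤ v i j) (hB : ∀ i, 0 < B i) (hd : ∀ i, 0 ≤ d i)
    (hx : ∀ i j, 0 ≤ x i j) (hp : ∀ j, 0 ≤ p j)
    (halloc : ∀ j, ∑ i, x i j ≤ 1)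
    (hu : ∀ i, 0 < (∑ j, v i j * x i j) - d i)
    (hkkt : ∀ i j, B i * v i j / ((∑ j', v i j' * x i j') - d i) ≤ p j)
    (hcs : ∀ i j, 0 < x i j →
      B i * v i j / ((∑ j', v i j' * x i j') - d i) = p j)
    (hfull : ∀ j, 0 < p j → ∑ i, x i j = 1) :
    (∀ i, ∀ y : Fin m → ℝ, (∀ j, 0 ≤ y j) →
      0 < (∑ j, v i j * y j) - d i →
      (∑ j, p j * y j) ≤ B i * (1 + d i / ((∑ j, v i j * y j) - d i)) →
      (∑ j, v i j * y j) - d i ≤ (∑ j, v i j * x i j) - d i) ∧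
    (∀ j, 0 < p j → ∑ i, x i j = 1) := by
  refine ⟨?_, hfull⟩
  intro i y hy hw hbudget
  set u : ℝ := (∑ j', v i j' * x i j') - d i with hudef
  set w : ℝ := (∑ j, v i j * y j) - d i with hwdef
  have hu' : 0 < u := hu i
  have hwd : 0 < w + d i := by have := hd i; linarith
  have h1 : (B i / u) * ∑ j, v i j * y j ≤ ∑ j, p j * y j := by
    rw [Finset.mul_sum]
    apply Finset.sum_le_sum
    intro j _
    have hk : B i * v i j / u ≤ p j := hkkt i j
    calc B i / u * (v i j * y j) = (B i * v i j / u) * y j := by ring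
      _ ≤ p j * y j := mul_le_mul_of_nonneg_right hk (hy j)
  have hsum : ∑ j, v i j * y j = w + d i := by rw [hwdef]; ring
  rw [hsum] at h1
  have h2 : B i * (1 + d i / w) = B i * (w + d i) / w := by
    field_simp
  rw [h2] at hbudget
  have key : B i / u * (w + d i) ≤ B i * (w + d i) / w := le_trans h1 hbudget
  have hBwd : 0 < B i * (w + d i) := mul_pos (hB i) hwd
  rw [div_mul_eq_mul_div, div_le_div_iff₀ hu' hw] at key
  nlinarith
end

section
/- Assume v_{ij} = 1 for all buyers i and items j, and B_i = d_i > 0 for all buyers i. Suppose there exists an allocation giving every buyer strictly positive utility, and let x maximize Σ_i d_i log(Σ_j x_{ij} − d_i) over all allocations x ∈ ℝ_{≥0}^{n×m} with Σ_i x_{ij} ≤ 1 for each j and Σ_j x_{ij} − d_i > 0 for each i. Then the ratio (Σ_j x_{ij}) / d_i is equal for all buyers i; that is, there is a constant c > 1 with Σ_j x_{ij} = c · d_i for every i. -/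
open Finset Filter Topology

/-!
If buyer `i` had a smaller ratio `(∑ j, x i j) / d i` than buyer `k`, move a small amount `t`
of an item held by `k` over to `i`. The allocation stays feasible, and with surpluses
`p = ∑ j, x i j - d i`, `q = ∑ j, x k j - d k` the objective gains
`d i (log (p + t) - log p) - d k (log q - log (q - t))`. By `log y - log x ≥ 1 - x / y` this is
positive once `d k (p + t) < d i (q - t)`, which holds for small `t` since `d k p < d i q` is
exactly the ratio inequality. Hence at a maximizer all ratios agree, and their common value
exceeds `1` because every surplus is positive.
-/

theorem mul_log_add_mul_log_lt_of_transfer {a b p q t : ℝ} (ha : 0 < a) (hb : 0 < b)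
    (hp : 0 < p) (ht : 0 < t) (hqt : 0 < q - t) (hgain : b * (p + t) < a * (q - t)) :
    a * Real.log p + b * Real.log q < a * Real.log (p + t) + b * Real.log (q - t) := by
  have hpt : 0 < p + t := by linarith
  have hq : 0 < q := by linarith
  have hlog_p : t / (p + t) ≤ Real.log (p + t) - Real.log p := by
    have h := Real.log_le_sub_one_of_pos (div_pos hp hpt)
    rw [Real.log_div hp.ne' hpt.ne'] at h
    have e : p / (p + t) - 1 = -(t / (p + t)) := by field_simp; ring
    linarith
  have hlog_q : Real.log q - Real.log (q - t) ≤ t / (q - t) := by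
    have h := Real.log_le_sub_one_of_pos (div_pos hq hqt)
    rw [Real.log_div hq.ne' hqt.ne'] at h
    have e : q / (q - t) - 1 = t / (q - t) := by field_simp; ring
    linarith
  have hfrac : b * (t / (q - t)) < a * (t / (p + t)) := by
    rw [← mul_div_assoc, ← mul_div_assoc, div_lt_div_iff₀ hqt hpt]; nlinarith
  nlinarith [mul_le_mul_of_nonneg_left hlog_p ha.le, mul_le_mul_of_nonneg_left hlog_q hb.le]

theorem exists_pos_le_mul_add_lt_mul_sub {a b p q s : ℝ} (hs : 0 < s) (hbpaq : b * p < a * q) :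
    ∃ t, 0 < t ∧ t ≤ s ∧ b * (p + t) < a * (q - t) := by
  have hnear : ∀ᶠ t in 𝓝 (0 : ℝ), b * (p + t) < a * (q - t) :=
    ContinuousAt.eventually_lt (by fun_prop) (by fun_prop) (by simpa using hbpaq)
  obtain ⟨t, hgain, ht, hts⟩ :=
    ((hnear.filter_mono nhdsWithin_le_nhds).and (Ioc_mem_nhdsGT hs)).exists
  exact ⟨t, ht, hts, hgain⟩

theorem Finset.sum_lt_sum_of_eq_off_pair {ι M : Type*} [Fintype ι] [DecidableEq ι]
    [AddCommMonoid M] [PartialOrder M] [IsOrderedCancelAddMonoid M] {f g : ι → M} {i k : ι}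
    (hik : i ≠ k) (hfg : ∀ l, l ≠ i → l ≠ k → f l = g l) (hlt : f i + f k < g i + g k) :
    ∑ l, f l < ∑ l, g l := by
  have hpair : ({i, k} : Finset ι) ⊆ univ := subset_univ _
  rw [← sum_sdiff hpair, ← sum_sdiff hpair (f := g), sum_pair hik, sum_pair hik]
  refine add_lt_add_of_le_of_lt (sum_congr rfl fun l hl => ?_).le hlt
  simp only [mem_sdiff, mem_univ, mem_insert, mem_singleton, not_or, true_and] at hl
  exact hfg l hl.1 hl.2

section Transfer

variable {ι κ : Type*} [DecidableEq ι] [DecidableEq κ]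

def transfer (x : ι → κ → ℝ) (k i : ι) (j : κ) (t : ℝ) : ι → κ → ℝ :=
  x - Pi.single k (Pi.single j t) + Pi.single i (Pi.single j t)

variable {x : ι → κ → ℝ} {k i : ι} {j : κ} {t : ℝ}

theorem sum_transfer_apply_col [Fintype ι] (j' : κ) :
    ∑ l, transfer x k i j t l j' = ∑ l, x l j' := by
  simp [transfer, sum_add_distrib, sum_sub_distrib, ← Finset.sum_apply]

theorem sum_transfer_row [Fintype κ] (l : ι) :
    ∑ j', transfer x k i j t l j' =
      ∑ j', x l j' - (Pi.single k t : ι → ℝ) l + (Pi.single i t : ι → ℝ) l := by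
  simp only [transfer, Pi.add_apply, Pi.sub_apply, sum_add_distrib, sum_sub_distrib,
    Pi.single_apply]
  split_ifs <;> simp

theorem transfer_nonneg (hx : ∀ l j', 0 ≤ x l j') (ht : 0 ≤ t) (htx : t ≤ x k j) (hik : i ≠ k)
    (l : ι) (j' : κ) : 0 ≤ transfer x k i j t l j' := by
  rcases eq_or_ne l k with rfl | hlk
  · rcases eq_or_ne j' j with rfl | hj
    · simpa [transfer, hik.symm] using htx
    · simpa [transfer, hik.symm, hj] using hx l j'
  · have hgain : 0 ≤ (Pi.single i (Pi.single j t) : ι → κ → ℝ) l j' := by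
      by_cases hli : l = i <;> by_cases hj : j' = j <;> simp [hli, hj, ht]
    simp only [transfer, Pi.add_apply, Pi.sub_apply, Pi.single_eq_of_ne hlk, sub_zero]
    exact add_nonneg (hx l j') hgain

end Transfer

noncomputable def egObjective {ι κ : Type*} [Fintype ι] [Fintype κ] (d : ι → ℝ)
    (y : ι → κ → ℝ) : ℝ :=
  ∑ i, d i * Real.log ((∑ j, y i j) - d i)

theorem sum_div_le_sum_div_of_isMaximizer {ι κ : Type*} [Fintype ι] [Fintype κ] [DecidableEq ι]
    [DecidableEq κ] {d : ι → ℝ} (hd : ∀ i, 0 < d i) {x : ι → κ → ℝ}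
    (hx : ∀ i j, 0 ≤ x i j) (halloc : ∀ j, ∑ i, x i j ≤ 1)
    (hpos : ∀ i, 0 < (∑ j, x i j) - d i)
    (hopt : ∀ y : ι → κ → ℝ, (∀ i j, 0 ≤ y i j) → (∀ j, ∑ i, y i j ≤ 1) →
      (∀ i, 0 < (∑ j, y i j) - d i) → egObjective d y ≤ egObjective d x) (i k : ι) :
    (∑ j, x k j) / d k ≤ (∑ j, x i j) / d i := by
  by_contra! hlt
  have hik : i ≠ k := by rintro rfl; exact lt_irrefl _ hlt
  have hcross : d k * ((∑ j, x i j) - d i) < d i * ((∑ j, x k j) - d k) := by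
    rw [div_lt_div_iff₀ (hd i) (hd k)] at hlt; linarith
  obtain ⟨j, -, hj⟩ : ∃ j ∈ univ, (0 : ℝ) < x k j :=
    exists_lt_of_sum_lt (by simpa using (hd k).trans (sub_pos.1 (hpos k)))
  obtain ⟨t, ht, htx, hgain⟩ := exists_pos_le_mul_add_lt_mul_sub hj hcross
  have hkt : 0 < (∑ j', x k j') - d k - t :=
    pos_of_mul_pos_right ((mul_pos (hd k) (add_pos (hpos i) ht)).trans hgain) (hd i).le
  set y := transfer x k i j t
  have hrow_i : ∑ j', y i j' = (∑ j', x i j') + t := by simp [y, sum_transfer_row, hik]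
  have hrow_k : ∑ j', y k j' = (∑ j', x k j') - t := by simp [y, sum_transfer_row, hik.symm]
  have hrow : ∀ l, l ≠ i → l ≠ k → ∑ j', y l j' = ∑ j', x l j' := by
    intro l hli hlk; simp [y, sum_transfer_row, hli, hlk]
  have hypos : ∀ l, 0 < (∑ j', y l j') - d l := by
    intro l
    by_cases hli : l = i
    · subst hli; rw [hrow_i]; linarith [hpos l]
    by_cases hlk : l = k
    · subst hlk; rw [hrow_k, sub_right_comm]; exact hkt
    rw [hrow l hli hlk]; exact hpos l
  refine (hopt y (transfer_nonneg hx ht.le htx hik) (fun j' => ?_) hypos).not_gt ?_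
  · rw [sum_transfer_apply_col]; exact halloc j'
  refine sum_lt_sum_of_eq_off_pair hik (fun l hli hlk => by rw [hrow l hli hlk]) ?_
  rw [hrow_i, hrow_k, add_sub_right_comm, sub_right_comm]
  exact mul_log_add_mul_log_lt_of_transfer (hd i) (hd k) (hpos i) ht hkt hgain

theorem eg_budget_eq_demand_proportional_allocation_general
    (n m : ℕ) (d : Fin n → ℝ) (hd : ∀ i, 0 < d i)
    (x : Fin n → Fin m → ℝ)
    (hx : ∀ i j, 0 ≤ x i j) (halloc : ∀ j, ∑ i, x i j ≤ 1)
    (hpos : ∀ i, 0 < (∑ j, x i j) - d i)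
    (hopt : ∀ y : Fin n → Fin m → ℝ, (∀ i j, 0 ≤ y i j) → (∀ j, ∑ i, y i j ≤ 1) →
      (∀ i, 0 < (∑ j, y i j) - d i) →
      ∑ i, d i * Real.log ((∑ j, y i j) - d i) ≤
        ∑ i, d i * Real.log ((∑ j, x i j) - d i)) :
    ∃ c : ℝ, 1 < c ∧ ∀ i, (∑ j, x i j) = c * d i := by
  rcases isEmpty_or_nonempty (Fin n) with _ | ⟨⟨i₀⟩⟩
  · exact ⟨2, one_lt_two, isEmptyElim⟩
  have hratio := sum_div_le_sum_div_of_isMaximizer hd hx halloc hpos hopt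
  refine ⟨(∑ j, x i₀ j) / d i₀, (one_lt_div (hd i₀)).2 (sub_pos.1 (hpos i₀)), fun i => ?_⟩
  rw [le_antisymm (hratio i i₀) (hratio i₀ i), div_mul_cancel₀ _ (hd i).ne']

/-- With all valuations equal to one and budgets equal to demands, any maximizer
of the (budget-weighted) Eisenberg–Gale objective with demands allocates to
every buyer the same constant multiple of their demand. -/
theorem eg_budget_eq_demand_proportional_allocation
    (n m : ℕ) (d : Fin n → ℝ) (hd : ∀ i, 0 < d i)
    (x : Fin n → Fin m → ℝ)
    (hexist : ∃ y : Fin n → Fin m → ℝ, (∀ i j, 0 ≤ y i j) ∧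
      (∀ j, ∑ i, y i j ≤ 1) ∧ (∀ i, 0 < (∑ j, y i j) - d i))
    (hx : ∀ i j, 0 ≤ x i j) (halloc : ∀ j, ∑ i, x i j ≤ 1)
    (hpos : ∀ i, 0 < (∑ j, x i j) - d i)
    (hopt : ∀ y : Fin n → Fin m → ℝ, (∀ i j, 0 ≤ y i j) → (∀ j, ∑ i, y i j ≤ 1) →
      (∀ i, 0 < (∑ j, y i j) - d i) →
      ∑ i, d i * Real.log ((∑ j, y i j) - d i) ≤
        ∑ i, d i * Real.log ((∑ j, x i j) - d i)) :
    ∃ c : ℝ, 1 < c ∧ ∀ i, (∑ j, x i j) = c * d i :=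
  eg_budget_eq_demand_proportional_allocation_general n m d hd x hx halloc hpos hopt
end

section
/- Assume binary valuations (v_{ij} ∈ {0,1} for all i, j) and unit budgets (B_i = 1 for all i), and assume there exists an allocation giving every buyer strictly positive utility. Then an allocation x with u_i(x_i) > 0 for all i is leximin-optimal if and only if it maximizes the Nash welfare Π_i u_i(x_i) over all allocations; i.e., the set of leximin-optimal allocations equals the set of maximum-Nash-welfare allocations. -/
/-!
With binary valuations the utility vectors achievable by allocations form the polymatroid of the
coverage function `S ↦ #(items liked by someone in S)`: a fractional Hall theorem, proved by
separating a point from the compact convex set of achievable vectors and comparing with a greedy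
allocation. Leximin optimality and Nash optimality both forbid two local improvements (raising one
buyer, or shifting a little utility from a richer to a poorer buyer), and on a polymatroid this
forces, by submodularity, every sublevel set `{i | u i ≤ τ}` of the utility vector `u` to be tight.
Tight sublevel sets give `∑_{u ≤ τ} w ≤ ∑_{u ≤ τ} u` for every achievable `w`; this rules out a
leximin improvement directly, and a larger Nash product by Abel summation against the weights
`1 / u i` together with `x ≤ exp (x - 1)`.
-/

open Finset

/-- The value at position `i` of the nondecreasing rearrangement of `v`. -/
noncomputable def sortedVal {n : ℕ} (v : Fin n → ℝ) (i : Fin n) : ℝ :=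
  v (Tuple.sort v i)

/-- `v` is leximin-greater than `w`: after sorting both vectors in
nondecreasing order, at the first index where they differ `v` is strictly
larger. -/
noncomputable def LexGt {n : ℕ} (v w : Fin n → ℝ) : Prop :=
  ∃ k : Fin n, (∀ i : Fin n, i < k → sortedVal v i = sortedVal w i) ∧
    sortedVal w k < sortedVal v k

section Sorted

variable {n : ℕ}

theorem sortedVal_le_iff (v : Fin n → ℝ) (c : ℝ) (j : Fin n) :
    sortedVal v j ≤ c ↔ (j : ℕ) < #{i | v i ≤ c} := by
  have h := (Tuple.lt_card_le_iff_apply_le_of_monotone (a := c) (j := j)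
    (Tuple.monotone_sort v)).symm
  rw [card_equiv (Tuple.sort v) (t := {i | v i ≤ c}) (by simp)] at h
  exact h

theorem lexGt_of_card_lt (w u : Fin n → ℝ) (c : ℝ)
    (hbelow : ∀ c' < c, #{i | w i ≤ c'} = #{i | u i ≤ c'})
    (hat : #{i | w i ≤ c} < #{i | u i ≤ c}) : LexGt w u := by
  have hk : #{i | w i ≤ c} < n :=
    hat.trans_le (card_le_univ _ |>.trans_eq (Fintype.card_fin n))
  refine ⟨⟨_, hk⟩, fun j hj => ?_, ?_⟩
  · have hw : sortedVal w j ≤ c := (sortedVal_le_iff w c j).2 hj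
    have hu : sortedVal u j ≤ c :=
      (sortedVal_le_iff u c j).2 (lt_trans (Fin.lt_def.1 hj) hat)
    have hsame : ∀ c' < c, (sortedVal w j ≤ c' ↔ sortedVal u j ≤ c') := fun c' hc' => by
      rw [sortedVal_le_iff, sortedVal_le_iff, hbelow c' hc']
    refine le_antisymm (not_lt.1 fun h => ?_) (not_lt.1 fun h => ?_)
    · exact h.not_ge ((hsame _ (h.trans_le hw)).2 le_rfl)
    · exact h.not_ge ((hsame _ (h.trans_le hu)).1 le_rfl)
  · exact ((sortedVal_le_iff u c _).2 hat).trans_lt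
      (not_le.1 fun h => ((sortedVal_le_iff w c _).1 h).false)

theorem lexGt_of_lt_of_forall_ne {w u : Fin n → ℝ} {a : Fin n} (ha : u a < w a)
    (hother : ∀ i ≠ a, w i = u i ∨ (u a < u i ∧ u a < w i)) : LexGt w u := by
  refine lexGt_of_card_lt w u (u a) (fun c' hc' => ?_) (card_lt_card ?_)
  · congr 1
    refine filter_congr fun i _ => ?_
    rcases eq_or_ne i a with rfl | hia
    · exact iff_of_false (by linarith) (by linarith)
    · rcases hother i hia with h | h
      · rw [h]
      · exact iff_of_false (by linarith) (by linarith)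
  · refine (ssubset_iff_of_subset fun i hi => ?_).2 ⟨a, by simp, by simpa using ha⟩
    simp only [mem_filter, mem_univ, true_and] at hi ⊢
    rcases eq_or_ne i a with rfl | hia
    · linarith
    · rcases hother i hia with h | h
      · rwa [← h]
      · linarith

theorem sum_filter_val_lt_card_le_sum {s : Fin n → ℝ} (hs : Monotone s) (E : Finset (Fin n)) :
    ∑ j ∈ univ.filter (fun j : Fin n => (j : ℕ) < #E), s j ≤ ∑ j ∈ E, s j := by
  set I := univ.filter (fun j : Fin n => (j : ℕ) < #E)
  have hcard : #I = #E := by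
    rw [Fin.card_filter_val_lt]
    exact min_eq_right (card_le_univ E |>.trans_eq (Fintype.card_fin n))
  rw [← sub_nonpos, ← sum_sdiff_sub_sum_sdiff, sub_nonpos]
  rcases (E \ I).eq_empty_or_nonempty with hempty | hne
  · rw [hempty, card_eq_zero.1 ((card_sdiff_comm hcard).trans (card_eq_zero.2 hempty))]
  · have hsep : ∀ j ∈ I \ E, s j ≤ (E \ I).inf' hne s := fun j hj =>
      le_inf' _ _ fun j' hj' => hs (Fin.le_def.2 (by simp [I] at hj hj'; omega))
    calc ∑ j ∈ I \ E, s j ≤ #(I \ E) • (E \ I).inf' hne s := sum_le_card_nsmul _ _ _ hsep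
      _ = #(E \ I) • (E \ I).inf' hne s := by rw [card_sdiff_comm hcard]
      _ ≤ ∑ j ∈ E \ I, s j := card_nsmul_le_sum _ _ _ fun j hj => inf'_le _ hj

theorem sum_filter_val_lt_card_sortedVal_le_sum (v : Fin n → ℝ) (D : Finset (Fin n)) :
    ∑ j ∈ univ.filter (fun j : Fin n => (j : ℕ) < #D), sortedVal v j ≤ ∑ i ∈ D, v i := by
  have h := sum_filter_val_lt_card_le_sum (Tuple.monotone_sort v)
    (D.map (Tuple.sort v).symm.toEmbedding)
  simpa [sortedVal] using h

theorem sum_sublevel_eq_sum_sortedVal (v : Fin n → ℝ) (c : ℝ) :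
    ∑ i ∈ univ.filter (fun i => v i ≤ c), v i
      = ∑ j ∈ univ.filter (fun j : Fin n => (j : ℕ) < #{i | v i ≤ c}), sortedVal v j := by
  refine (sum_equiv (Tuple.sort v) (fun j => ?_) (fun _ _ => rfl)).symm
  simp only [mem_filter, mem_univ, true_and, ← sortedVal_le_iff]
  rfl

theorem not_lexGt_of_sum_sublevel_le {w u : Fin n → ℝ}
    (h : ∀ τ, ∑ i ∈ univ.filter (fun i => u i ≤ τ), w i
      ≤ ∑ i ∈ univ.filter (fun i => u i ≤ τ), u i) : ¬ LexGt w u := by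
  rintro ⟨k, hagree, hlt⟩
  set c := sortedVal u k
  have hk : (k : ℕ) < #{i | u i ≤ c} := (sortedVal_le_iff u c k).1 le_rfl
  have hprefix : ∑ j ∈ univ.filter (fun j : Fin n => (j : ℕ) < #{i | u i ≤ c}), sortedVal u j
      < ∑ j ∈ univ.filter (fun j : Fin n => (j : ℕ) < #{i | u i ≤ c}), sortedVal w j := by
    refine sum_lt_sum (fun j hj => ?_) ⟨k, by simpa using hk, hlt⟩
    rcases lt_or_ge j k with hjk | hkj
    · exact (hagree j hjk).ge
    · have hj : sortedVal u j ≤ c := (sortedVal_le_iff u c j).2 (by simpa using hj)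
      exact hj.trans (hlt.le.trans (Tuple.monotone_sort w hkj))
  have := sum_filter_val_lt_card_sortedVal_le_sum w (univ.filter fun i => u i ≤ c)
  linarith [h c, sum_sublevel_eq_sum_sortedVal u c]

end Sorted

section Welfare

variable {ι : Type*} [Fintype ι]

theorem sum_mul_nonneg_of_sum_superlevel_nonneg {c δ : ι → ℝ} (hc : ∀ i, 0 ≤ c i)
    (h : ∀ τ > 0, 0 ≤ ∑ i ∈ univ.filter (fun i => τ ≤ c i), δ i) :
    0 ≤ ∑ i, c i * δ i := by
  induction hN : #{i | 0 < c i} using Nat.strong_induction_on generalizing c with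
  | _ N ih =>
      rcases (univ.filter fun i => 0 < c i).eq_empty_or_nonempty with hempty | hpos
      · have hzero : ∀ i, c i = 0 := fun i =>
          le_antisymm (not_lt.1 (filter_eq_empty_iff.1 hempty (mem_univ i))) (hc i)
        simp [hzero]
      -- peel off the lowest positive layer `μ` and recurse on what lies above it
      obtain ⟨i₀, hi₀, hmin⟩ := exists_min_image _ c hpos
      set μ := c i₀
      have hμ : 0 < μ := by simpa using hi₀
      have hlayer : ∀ i, μ ≤ c i ↔ 0 < c i := fun i =>
        ⟨hμ.trans_le, fun hi => hmin i (by simpa using hi)⟩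
      set c' := fun i => max (c i - μ) 0
      have hdecomp : ∀ i, c i * δ i = c' i * δ i + μ * if μ ≤ c i then δ i else 0 := fun i => by
        by_cases hi : μ ≤ c i
        · simp only [c', if_pos hi, max_eq_left (sub_nonneg.2 hi)]
          ring
        · have : c i = 0 := (hc i).antisymm' (not_lt.1 fun h => hi ((hlayer i).2 h))
          simp only [c', if_neg hi, mul_zero, add_zero]
          rw [this, max_eq_right (by linarith)]
      have hsub : univ.filter (fun i => 0 < c' i) ⊂ univ.filter (fun i => 0 < c i) := by
        refine ssubset_of_subset_of_ne (fun i hi => ?_) fun heq => ?_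
        · simp only [mem_filter, mem_univ, true_and, c', lt_max_iff] at hi ⊢
          rcases hi with hi | hi <;> linarith
        · have := heq ▸ hi₀
          simp [c', μ] at this
      have hsuper : ∀ τ > 0,
          univ.filter (fun i => τ ≤ c' i) = univ.filter (fun i => τ + μ ≤ c i) := fun τ hτ => by
        ext i
        simp only [mem_filter, mem_univ, true_and, c', le_max_iff]
        constructor
        · rintro (h | h) <;> linarith
        · intro h; left; linarith
      have hrec := ih _ (hN ▸ card_lt_card hsub) (c := c') (fun i => le_max_right _ _)
        (fun τ hτ => hsuper τ hτ ▸ h (τ + μ) (by linarith)) rfl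
      calc 0 ≤ ∑ i, c' i * δ i + μ * ∑ i ∈ univ.filter (fun i => μ ≤ c i), δ i :=
            add_nonneg hrec (mul_nonneg hμ.le (h μ hμ))
        _ = ∑ i, c i * δ i := by
          rw [sum_filter, mul_sum, ← sum_add_distrib]
          exact sum_congr rfl fun i _ => (hdecomp i).symm

theorem prod_le_prod_of_sum_div_le_card {u w : ι → ℝ} (hu : ∀ i, 0 < u i) (hw : ∀ i, 0 ≤ w i)
    (h : ∑ i, w i / u i ≤ Fintype.card ι) : ∏ i, w i ≤ ∏ i, u i := by
  -- `x ≤ exp (x - 1)` turns the arithmetic bound into a bound on the product of the ratios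
  have hratio : ∏ i, w i / u i ≤ 1 :=
    calc ∏ i, w i / u i ≤ ∏ i, Real.exp (w i / u i - 1) :=
          prod_le_prod (fun i _ => div_nonneg (hw i) (hu i).le)
            fun i _ => by linarith [Real.add_one_le_exp (w i / u i - 1)]
      _ = Real.exp (∑ i, w i / u i - Fintype.card ι) := by
          rw [← Real.exp_sum, sum_sub_distrib, sum_const, card_univ, nsmul_one]
      _ ≤ 1 := Real.exp_le_one_iff.2 (sub_nonpos.2 h)
  have hprod : ∏ i, w i = (∏ i, w i / u i) * ∏ i, u i := by
    rw [← prod_mul_distrib]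
    exact prod_congr rfl fun i _ => (div_mul_cancel₀ _ (hu i).ne').symm
  rw [hprod]
  exact mul_le_of_le_one_left (prod_nonneg fun i _ => (hu i).le) hratio

theorem prod_le_prod_of_sum_sublevel_le {u w : ι → ℝ} (hu : ∀ i, 0 < u i) (hw : ∀ i, 0 ≤ w i)
    (h : ∀ τ, ∑ i ∈ univ.filter (fun i => u i ≤ τ), w i
      ≤ ∑ i ∈ univ.filter (fun i => u i ≤ τ), u i) : ∏ i, w i ≤ ∏ i, u i := by
  refine prod_le_prod_of_sum_div_le_card hu hw ?_
  have hlayers : 0 ≤ ∑ i, (u i)⁻¹ * (u i - w i) := by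
    refine sum_mul_nonneg_of_sum_superlevel_nonneg (fun i => (inv_pos.2 (hu i)).le)
      fun τ hτ => ?_
    have hset : univ.filter (fun i => τ ≤ (u i)⁻¹) = univ.filter (fun i => u i ≤ τ⁻¹) :=
      filter_congr fun i _ => le_inv_comm₀ hτ (hu i)
    rw [hset, sum_sub_distrib, sub_nonneg]
    exact h τ⁻¹
  have hterm : ∀ i, (u i)⁻¹ * (u i - w i) = 1 - w i / u i := fun i => by
    field_simp [(hu i).ne']
  simp only [hterm, sum_sub_distrib, sum_const, card_univ, nsmul_one, sub_nonneg] at hlayers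
  exact hlayers

structure IsLocallyOptimal [DecidableEq ι] (U : Set (ι → ℝ)) (u : ι → ℝ) : Prop where
  add_single_notMem : ∀ a, ∀ ε > 0, u + Pi.single a ε ∉ U
  add_single_sub_single_notMem :
    ∀ a b, ∀ ε > 0, ε < u b - u a → u + Pi.single a ε - Pi.single b ε ∉ U

theorem IsLocallyOptimal.of_forall_prod_le [DecidableEq ι] {U : Set (ι → ℝ)} {u : ι → ℝ}
    (hu : ∀ i, 0 < u i) (h : ∀ w ∈ U, (∀ i, 0 < w i) → ∏ i, w i ≤ ∏ i, u i) :
    IsLocallyOptimal U u where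
  add_single_notMem a ε hε hmem := by
    have hle : ∀ i, u i ≤ (u + Pi.single a ε : ι → ℝ) i := fun i => by
      rcases eq_or_ne i a with rfl | hia <;> simp [*, hε.le]
    refine (h _ hmem fun i => (hu i).trans_le (hle i)).not_gt
      (prod_lt_prod (fun i _ => hu i) (fun i _ => hle i) ⟨a, mem_univ a, by simpa⟩)
  add_single_sub_single_notMem a b ε hε hab hmem := by
    have hne : a ≠ b := by rintro rfl; linarith
    set w := u + Pi.single a ε - Pi.single b ε
    have hwa : w a = u a + ε := by simp [w, hne]
    have hwb : w b = u b - ε := by simp [w, hne.symm]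
    have hrest : ∀ i ∈ ({a, b} : Finset ι)ᶜ, w i = u i := fun i hi => by
      simp only [mem_compl, mem_insert, mem_singleton, not_or] at hi
      simp [w, hi.1, hi.2]
    have hwpos : ∀ i, 0 < w i := fun i => by
      rcases eq_or_ne i a with rfl | hia
      · linarith [hu i]
      rcases eq_or_ne i b with rfl | hib
      · linarith [hu a]
      rw [hrest i (by simp [hia, hib])]
      exact hu i
    refine (h w hmem hwpos).not_gt ?_
    rw [← prod_mul_prod_compl {a, b}, ← prod_mul_prod_compl {a, b} w, prod_pair hne,
      prod_pair hne, prod_congr rfl hrest, hwa, hwb]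
    refine mul_lt_mul_of_pos_right ?_ (prod_pos fun i _ => hu i)
    nlinarith

theorem IsLocallyOptimal.of_forall_not_lexGt {n : ℕ} {U : Set (Fin n → ℝ)} {u : Fin n → ℝ}
    (h : ∀ w ∈ U, ¬ LexGt w u) : IsLocallyOptimal U u where
  add_single_notMem a ε hε hmem := h _ hmem <|
    lexGt_of_lt_of_forall_ne (a := a) (by simpa) fun i hi => Or.inl (by simp [hi])
  add_single_sub_single_notMem a b ε hε hab hmem := by
    have hne : a ≠ b := by rintro rfl; linarith
    refine h _ hmem (lexGt_of_lt_of_forall_ne (a := a) (by simp [hne, hε]) fun i hi => ?_)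
    rcases eq_or_ne i b with rfl | hib
    · refine Or.inr ⟨by linarith, ?_⟩
      simp only [Pi.sub_apply, Pi.add_apply, Pi.single_eq_same, Pi.single_eq_of_ne hi]
      linarith
    · exact Or.inl (by simp [hi, hib])

end Welfare

section Polymatroid

open Filter Topology

variable {ι : Type*} {f : Finset ι → ℝ} {t : ι → ℝ}

def polymatroid (f : Finset ι → ℝ) : Set (ι → ℝ) :=
  {s | (∀ i, 0 ≤ s i) ∧ ∀ S, ∑ i ∈ S, s i ≤ f S}

def IsTight (f : Finset ι → ℝ) (t : ι → ℝ) (S : Finset ι) : Prop :=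
  ∑ i ∈ S, t i = f S

theorem IsTight.union_inter [DecidableEq ι] (hf : ∀ S T, f (S ∪ T) + f (S ∩ T) ≤ f S + f T)
    (ht : t ∈ polymatroid f) {S T : Finset ι} (hS : IsTight f t S) (hT : IsTight f t T) :
    IsTight f t (S ∪ T) ∧ IsTight f t (S ∩ T) := by
  have hsum := sum_union_inter (s₁ := S) (s₂ := T) (f := t)
  have := ht.2 (S ∪ T)
  have := ht.2 (S ∩ T)
  have := hf S T
  unfold IsTight at *
  constructor <;> linarith

theorem eventually_add_mul_le {p q r : ℝ} (h : p < r ∨ (p ≤ r ∧ q ≤ 0)) :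
    ∀ᶠ ε in 𝓝[>] (0 : ℝ), p + ε * q ≤ r := by
  rcases h with h | ⟨hpr, hq⟩
  · have hcont : Tendsto (fun ε : ℝ => p + ε * q) (𝓝 0) (𝓝 p) := by
      simpa using ((continuous_id.mul continuous_const).const_add p).tendsto' 0 p (by simp)
    exact nhdsWithin_le_nhds ((hcont.eventually (gt_mem_nhds h)).mono fun _ => le_of_lt)
  · filter_upwards [self_mem_nhdsWithin] with ε hε
    nlinarith [Set.mem_Ioi.1 hε]

theorem eventually_add_smul_mem_polymatroid [Fintype ι] (ht : t ∈ polymatroid f) {δ : ι → ℝ}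
    (htight : ∀ S, IsTight f t S → ∑ i ∈ S, δ i ≤ 0) (hzero : ∀ i, t i = 0 → 0 ≤ δ i) :
    ∀ᶠ ε in 𝓝[>] (0 : ℝ), t + ε • δ ∈ polymatroid f := by
  simp only [polymatroid, Set.mem_ofPred_eq, Pi.add_apply, Pi.smul_apply, smul_eq_mul,
    sum_add_distrib, ← mul_sum, eventually_and, eventually_all]
  constructor
  · intro i
    have := eventually_add_mul_le (p := -t i) (q := -δ i) (r := 0) <| by
      rcases (ht.1 i).lt_or_eq with h | h
      · left; linarith
      · right; constructor <;> linarith [hzero i h.symm]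
    exact this.mono fun ε hε => by linarith
  · intro S
    refine eventually_add_mul_le ?_
    rcases (ht.2 S).lt_or_eq with h | h
    · exact Or.inl h
    · exact Or.inr ⟨h.le, htight S h⟩

end Polymatroid

section LocalOptimality

open Filter Topology

variable {ι : Type*} [Fintype ι] [DecidableEq ι] {f : Finset ι → ℝ} {t d : ι → ℝ}

theorem exists_isTight_mem (ht : t ∈ polymatroid f)
    (hLO : IsLocallyOptimal ((· - d) '' polymatroid f) (t - d)) (a : ι) :
    ∃ S, a ∈ S ∧ IsTight f t S := by
  by_contra! hnone
  have hδ := eventually_add_smul_mem_polymatroid ht (δ := Pi.single a 1)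
    (fun S hS => by simp [sum_pi_single', mt (hnone S) (not_not.2 hS)])
    (fun i _ => by rcases eq_or_ne i a with rfl | h <;> simp [*])
  obtain ⟨ε, hmem, hε⟩ := (hδ.and self_mem_nhdsWithin).exists
  refine hLO.add_single_notMem a ε hε ⟨_, hmem, ?_⟩
  ext i
  rcases eq_or_ne i a with rfl | h
  · simp only [Pi.sub_apply, Pi.add_apply, Pi.smul_apply, Pi.single_eq_same, smul_eq_mul]
    ring
  · simp [h]

/-- The smallest tight set containing `a` works: a transfer to `a` from a richer member would
stay inside the polymatroid. -/
theorem exists_isTight_mem_forall_le (hf : ∀ S T, f (S ∪ T) + f (S ∩ T) ≤ f S + f T)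
    (ht : t ∈ polymatroid f) (ht0 : ∀ i, 0 < t i)
    (hLO : IsLocallyOptimal ((· - d) '' polymatroid f) (t - d)) (a : ι) :
    ∃ T, a ∈ T ∧ IsTight f t T ∧ ∀ b ∈ T, t b - d b ≤ t a - d a := by
  classical
  set 𝒯 := univ.filter fun S => a ∈ S ∧ IsTight f t S
  obtain ⟨S, haS, hS⟩ := exists_isTight_mem ht hLO a
  have hne : 𝒯.Nonempty := ⟨S, by simp [𝒯, haS, hS]⟩
  have hT : a ∈ 𝒯.inf' hne id ∧ IsTight f t (𝒯.inf' hne id) :=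
    inf'_induction hne id (p := fun T => a ∈ T ∧ IsTight f t T)
      (fun T₁ h₁ T₂ h₂ => ⟨mem_inter.2 ⟨h₁.1, h₂.1⟩, (h₁.2.union_inter hf ht h₂.2).2⟩)
      fun S hS => by simpa [𝒯] using hS
  refine ⟨_, hT.1, hT.2, fun b hb => not_lt.1 fun hlt => ?_⟩
  have hδ := eventually_add_smul_mem_polymatroid ht (δ := Pi.single a 1 - Pi.single b 1)
    (fun S hS => by
      by_cases haS : a ∈ S
      · have hsub : 𝒯.inf' hne id ⊆ S := inf'_le id (by simp [𝒯, haS, hS])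
        have hbS : b ∈ S := hsub hb
        simp [sum_sub_distrib, sum_pi_single', haS, hbS]
      · simp only [Pi.sub_apply, sum_sub_distrib, sum_pi_single', if_neg haS]
        split_ifs <;> norm_num)
    (fun i hi => absurd hi (ht0 i).ne')
  obtain ⟨ε, hmem, hε⟩ := (hδ.and (Ioo_mem_nhdsGT (sub_pos.2 hlt))).exists
  refine hLO.add_single_sub_single_notMem a b ε hε.1 (by simpa using hε.2) ⟨_, hmem, ?_⟩
  ext i
  simp only [Pi.sub_apply, Pi.add_apply, Pi.smul_apply, smul_eq_mul, Pi.single_apply]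
  split_ifs <;> ring

theorem isTight_sublevel (hf : ∀ S T, f (S ∪ T) + f (S ∩ T) ≤ f S + f T) (hf0 : f ∅ = 0)
    (ht : t ∈ polymatroid f) (ht0 : ∀ i, 0 < t i)
    (hLO : IsLocallyOptimal ((· - d) '' polymatroid f) (t - d)) (τ : ℝ) :
    IsTight f t (univ.filter fun i => t i - d i ≤ τ) := by
  choose T haT hT hle using exists_isTight_mem_forall_le hf ht ht0 hLO
  set L := univ.filter fun i => t i - d i ≤ τ
  have hL : L.sup T = L := by
    refine (Finset.sup_le fun a ha b hb => ?_).antisymm fun a ha => le_sup (f := T) ha (haT a)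
    simp only [L, mem_filter, mem_univ, true_and] at ha ⊢
    exact (hle a b hb).trans ha
  rw [← hL]
  exact sup_induction (by simp [IsTight, hf0]) (fun T₁ h₁ T₂ h₂ => (h₁.union_inter hf ht h₂).1)
    fun a _ => hT a

theorem sum_sublevel_le_of_isLocallyOptimal (hf : ∀ S T, f (S ∪ T) + f (S ∩ T) ≤ f S + f T)
    (hf0 : f ∅ = 0) (ht : t ∈ polymatroid f) (ht0 : ∀ i, 0 < t i)
    (hLO : IsLocallyOptimal ((· - d) '' polymatroid f) (t - d)) {s : ι → ℝ}
    (hs : s ∈ polymatroid f) (τ : ℝ) :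
    ∑ i ∈ univ.filter (fun i => t i - d i ≤ τ), (s i - d i)
      ≤ ∑ i ∈ univ.filter (fun i => t i - d i ≤ τ), (t i - d i) := by
  have htight := isTight_sublevel hf hf0 ht ht0 hLO τ
  rw [sum_sub_distrib, sum_sub_distrib, htight]
  linarith [hs.2 (univ.filter fun i => t i - d i ≤ τ)]

end LocalOptimality

section Allocation

variable {ι κ : Type*} [Fintype ι]

def IsAllocation (x : ι → κ → ℝ) : Prop :=
  (∀ i j, 0 ≤ x i j) ∧ ∀ j, ∑ i, x i j ≤ 1

theorem convex_setOf_isAllocation : Convex ℝ {x : ι → κ → ℝ | IsAllocation x} := by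
  intro x hx y hy a b ha hb hab
  refine ⟨fun i j => ?_, fun j => ?_⟩
  · have := hx.1 i j
    have := hy.1 i j
    simp only [Pi.add_apply, Pi.smul_apply, smul_eq_mul]
    positivity
  · simp only [Pi.add_apply, Pi.smul_apply, smul_eq_mul, sum_add_distrib, ← mul_sum]
    nlinarith [hx.2 j, hy.2 j]

theorem isCompact_setOf_isAllocation : IsCompact {x : ι → κ → ℝ | IsAllocation x} := by
  refine isCompact_Icc (a := 0) (b := 1) |>.of_isClosed_subset ?_ fun x hx =>
    ⟨fun i j => hx.1 i j,
      fun i j => (single_le_sum (fun i' _ => hx.1 i' j) (mem_univ i)).trans (hx.2 j)⟩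
  simp only [IsAllocation, Set.ofPred_and, Set.ofPred_forall]
  exact (isClosed_iInter fun i => isClosed_iInter fun j =>
      isClosed_le continuous_const (by fun_prop)).inter
    (isClosed_iInter fun j => isClosed_le (by fun_prop) continuous_const)

theorem exists_greedy_allocation {v : ι → κ → ℝ} (w : ι → ℝ) :
    ∃ x : ι → κ → ℝ, IsAllocation x ∧ (∀ i j, x i j ≠ 0 → v i j = 1 ∧ 0 < w i) ∧
      ∀ i j, v i j = 1 → 0 < w i → ∃ b, w i ≤ w b ∧ x b j = 1 := by
  classical
  have hcol : ∀ j, ∃ col : ι → ℝ, (∀ i, 0 ≤ col i) ∧ ∑ i, col i ≤ 1 ∧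
      (∀ i, col i ≠ 0 → v i j = 1 ∧ 0 < w i) ∧
      ∀ i, v i j = 1 → 0 < w i → ∃ b, w i ≤ w b ∧ col b = 1 := by
    intro j
    set A := univ.filter fun i => v i j = 1 ∧ 0 < w i
    rcases A.eq_empty_or_nonempty with hA | hA
    · refine ⟨0, fun _ => le_rfl, by simp, fun i h => absurd rfl h, fun i hvi hwi => ?_⟩
      exact absurd (mem_filter.2 ⟨mem_univ i, hvi, hwi⟩) (hA ▸ notMem_empty i)
    · obtain ⟨b, hb, hmax⟩ := A.exists_max_image w hA
      refine ⟨Pi.single b 1, fun i => ?_, by simp, fun i hi => ?_,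
        fun i hvi hwi => ⟨b, hmax i (by simp [A, hvi, hwi]), by simp⟩⟩
      · rcases eq_or_ne i b with rfl | h <;> simp [*]
      · rcases eq_or_ne i b with rfl | h
        · simpa [A] using hb
        · simp [h] at hi
  choose col hcol using hcol
  exact ⟨fun i j => col j i, ⟨fun i j => (hcol j).1 i, fun j => (hcol j).2.1⟩,
    fun i j => (hcol j).2.2.1 i, fun i j => (hcol j).2.2.2 i⟩

end Allocation

section Bundle

variable {ι κ : Type*} [Fintype κ] {v : ι → κ → ℝ}

def bundleValue (v x : ι → κ → ℝ) : ι → ℝ :=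
  fun i => ∑ j, v i j * x i j

open scoped Classical in
noncomputable def neighbors (v : ι → κ → ℝ) (S : Finset ι) : Finset κ :=
  univ.filter fun j => ∃ i ∈ S, v i j = 1

theorem mem_neighbors {S : Finset ι} {j : κ} : j ∈ neighbors v S ↔ ∃ i ∈ S, v i j = 1 := by
  simp [neighbors]

theorem card_neighbors_union_add_card_inter_le [DecidableEq ι] (S T : Finset ι) :
    (#(neighbors v (S ∪ T)) : ℝ) + #(neighbors v (S ∩ T))
      ≤ #(neighbors v S) + #(neighbors v T) := by
  classical
  have hunion : neighbors v (S ∪ T) = neighbors v S ∪ neighbors v T := by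
    ext j
    simp only [mem_neighbors, mem_union, or_and_right, exists_or]
  have hinter : neighbors v (S ∩ T) ⊆ neighbors v S ∩ neighbors v T := fun j hj => by
    obtain ⟨i, hi, hij⟩ := mem_neighbors.1 hj
    exact mem_inter.2 ⟨mem_neighbors.2 ⟨i, (mem_inter.1 hi).1, hij⟩,
      mem_neighbors.2 ⟨i, (mem_inter.1 hi).2, hij⟩⟩
  have := card_union_add_card_inter (neighbors v S) (neighbors v T)
  have := card_le_card hinter
  rw [hunion]
  norm_cast
  omega

theorem isLinearMap_bundleValue : IsLinearMap ℝ (bundleValue (ι := ι) (κ := κ) v) :=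
  ⟨fun x y => by ext i; simp [bundleValue, mul_add, sum_add_distrib],
    fun c x => by ext i; simp [bundleValue, mul_sum, mul_left_comm]⟩

theorem continuous_bundleValue : Continuous (bundleValue (ι := ι) (κ := κ) v) := by
  unfold bundleValue
  fun_prop

end Bundle

section Hall

variable {ι κ : Type*} [Fintype ι] [Fintype κ] {v : ι → κ → ℝ}

theorem bundleValue_mem_polymatroid (hv : ∀ i j, v i j = 0 ∨ v i j = 1) {x : ι → κ → ℝ}
    (hx : IsAllocation x) : bundleValue v x ∈ polymatroid fun S => (#(neighbors v S) : ℝ) := by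
  classical
  have hv0 : ∀ i j, 0 ≤ v i j := fun i j => by rcases hv i j with h | h <;> simp [h]
  refine ⟨fun i => sum_nonneg fun j _ => mul_nonneg (hv0 i j) (hx.1 i j), fun S => ?_⟩
  -- only items liked by someone in `S` contribute, and each contributes at most its supply
  have hcol : ∀ j, ∑ i ∈ S, v i j * x i j ≤ if j ∈ neighbors v S then 1 else 0 := fun j => by
    split_ifs with hj
    · calc ∑ i ∈ S, v i j * x i j ≤ ∑ i, x i j :=
            (sum_le_sum fun i _ => by rcases hv i j with h | h <;> simp [h, hx.1 i j]).trans
              (sum_le_sum_of_subset_of_nonneg (subset_univ S) fun i _ _ => hx.1 i j)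
        _ ≤ 1 := hx.2 j
    · refine (sum_eq_zero fun i hi => ?_).le
      rcases hv i j with h | h
      · simp [h]
      · exact absurd (mem_neighbors.2 ⟨i, hi, h⟩) hj
  calc ∑ i ∈ S, bundleValue v x i = ∑ j, ∑ i ∈ S, v i j * x i j := sum_comm
    _ ≤ ∑ j, if j ∈ neighbors v S then (1 : ℝ) else 0 := sum_le_sum fun j _ => hcol j
    _ = #(neighbors v S) := by simp

theorem card_neighbors_le_sum_bundleValue (hv : ∀ i j, v i j = 0 ∨ v i j = 1)
    {x : ι → κ → ℝ} (hx : IsAllocation x) {S : Finset ι}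
    (hcover : ∀ j ∈ neighbors v S, ∃ b ∈ S, v b j = 1 ∧ x b j = 1) :
    (#(neighbors v S) : ℝ) ≤ ∑ i ∈ S, bundleValue v x i := by
  have hterm : ∀ i j, 0 ≤ v i j * x i j := fun i j =>
    mul_nonneg (by rcases hv i j with h | h <;> simp [h]) (hx.1 i j)
  calc (#(neighbors v S) : ℝ) = ∑ j ∈ neighbors v S, 1 := by simp
    _ ≤ ∑ j ∈ neighbors v S, ∑ i ∈ S, v i j * x i j := sum_le_sum fun j hj => by
        obtain ⟨b, hb, hvb, hxb⟩ := hcover j hj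
        simpa [hvb, hxb] using single_le_sum (fun i _ => hterm i j) hb
    _ ≤ ∑ j, ∑ i ∈ S, v i j * x i j :=
        sum_le_sum_of_subset_of_nonneg (subset_univ _) fun j _ _ =>
          sum_nonneg fun i _ => hterm i j
    _ = ∑ i ∈ S, bundleValue v x i := sum_comm

theorem exists_isAllocation_sum_mul_le (hv : ∀ i j, v i j = 0 ∨ v i j = 1) (w : ι → ℝ)
    {s : ι → ℝ} (hs : s ∈ polymatroid fun S => (#(neighbors v S) : ℝ)) :
    ∃ x, IsAllocation x ∧ ∑ i, w i * s i ≤ ∑ i, w i * bundleValue v x i := by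
  obtain ⟨x, hx, hsupp, hbest⟩ := exists_greedy_allocation (v := v) w
  refine ⟨x, hx, ?_⟩
  have hzero : ∀ i, w i ≤ 0 → bundleValue v x i = 0 := fun i hi =>
    sum_eq_zero fun j _ => by
      by_cases hxij : x i j = 0
      · simp [hxij]
      · exact absurd hi (not_le.2 (hsupp i j hxij).2)
  set c := fun i => max (w i) 0
  -- against the weights `c`, the greedy allocation beats `s` on every superlevel set
  have hlayers : 0 ≤ ∑ i, c i * (bundleValue v x i - s i) := by
    refine sum_mul_nonneg_of_sum_superlevel_nonneg (fun i => le_max_right _ _) fun τ hτ => ?_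
    set S := univ.filter fun i => τ ≤ c i
    have hS : ∀ i, i ∈ S ↔ τ ≤ w i := fun i => by simp [S, c, not_le.2 hτ]
    have hcover : ∀ j ∈ neighbors v S, ∃ b ∈ S, v b j = 1 ∧ x b j = 1 := fun j hj => by
      obtain ⟨i, hi, hvij⟩ := mem_neighbors.1 hj
      obtain ⟨b, hwb, hxb⟩ := hbest i j hvij (hτ.trans_le ((hS i).1 hi))
      exact ⟨b, (hS b).2 (((hS i).1 hi).trans hwb), (hsupp b j (by simp [hxb])).1, hxb⟩
    rw [sum_sub_distrib, sub_nonneg]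
    exact (hs.2 S).trans (card_neighbors_le_sum_bundleValue hv hx hcover)
  calc ∑ i, w i * s i ≤ ∑ i, c i * s i :=
        sum_le_sum fun i _ => mul_le_mul_of_nonneg_right (le_max_left _ _) (hs.1 i)
    _ ≤ ∑ i, c i * bundleValue v x i := by
        simpa [mul_sub, sum_sub_distrib] using hlayers
    _ = ∑ i, w i * bundleValue v x i := sum_congr rfl fun i _ => by
        rcases le_or_gt (w i) 0 with h | h
        · simp [hzero i h]
        · simp [c, h.le]

theorem image_bundleValue_eq_polymatroid (hv : ∀ i j, v i j = 0 ∨ v i j = 1) :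
    bundleValue v '' {x | IsAllocation x} = polymatroid fun S => (#(neighbors v S) : ℝ) := by
  classical
  refine Set.Subset.antisymm
    (Set.image_subset_iff.2 fun x hx => bundleValue_mem_polymatroid hv hx) fun s hs => ?_
  by_contra hnot
  obtain ⟨φ, α, hφ, hαs⟩ := geometric_hahn_banach_closed_point
    (convex_setOf_isAllocation.is_linear_image isLinearMap_bundleValue)
    (isCompact_setOf_isAllocation.image continuous_bundleValue).isClosed hnot
  set w := fun i => φ fun j => if i = j then 1 else 0
  have hφw : ∀ t, φ t = ∑ i, w i * t i := fun t => by
    rw [← ContinuousLinearMap.coe_coe, LinearMap.pi_apply_eq_sum_univ]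
    simp [w, mul_comm]
  obtain ⟨x, hx, hle⟩ := exists_isAllocation_sum_mul_le hv w hs
  have := hφ _ ⟨x, hx, rfl⟩
  rw [hφw] at this hαs
  linarith

theorem sum_sublevel_bundleValue_le_of_isLocallyOptimal [DecidableEq ι]
    (hv : ∀ i j, v i j = 0 ∨ v i j = 1) {d : ι → ℝ}
    {x : ι → κ → ℝ} (hx : IsAllocation x) (hx0 : ∀ i, 0 < bundleValue v x i)
    (hLO : IsLocallyOptimal ((fun y => bundleValue v y - d) '' {y | IsAllocation y})
      (bundleValue v x - d))
    {y : ι → κ → ℝ} (hy : IsAllocation y) (τ : ℝ) :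
    ∑ i ∈ univ.filter (fun i => bundleValue v x i - d i ≤ τ), (bundleValue v y i - d i)
      ≤ ∑ i ∈ univ.filter (fun i => bundleValue v x i - d i ≤ τ), (bundleValue v x i - d i) := by
  rw [← Set.image_image (· - d), image_bundleValue_eq_polymatroid hv] at hLO
  exact sum_sublevel_le_of_isLocallyOptimal card_neighbors_union_add_card_inter_le
    (by simp [neighbors]) (bundleValue_mem_polymatroid hv hx) hx0 hLO
    (bundleValue_mem_polymatroid hv hy) τ

end Hall

theorem leximin_iff_mnw_binary_unit_budget_general
    (n m : ℕ) (v : Fin n → Fin m → ℝ) (d : Fin n → ℝ)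
    (hv : ∀ i j, v i j = 0 ∨ v i j = 1) (hd : ∀ i, 0 ≤ d i)
    (x : Fin n → Fin m → ℝ)
    (hx : ∀ i j, 0 ≤ x i j) (halloc : ∀ j, ∑ i, x i j ≤ 1)
    (hupos : ∀ i, 0 < (∑ j, v i j * x i j) - d i) :
    (¬ ∃ y : Fin n → Fin m → ℝ, (∀ i j, 0 ≤ y i j) ∧ (∀ j, ∑ i, y i j ≤ 1) ∧
        LexGt (fun i => (∑ j, v i j * y i j) - d i)
          (fun i => (∑ j, v i j * x i j) - d i))
    ↔
    (∀ y : Fin n → Fin m → ℝ, (∀ i j, 0 ≤ y i j) → (∀ j, ∑ i, y i j ≤ 1) →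
      (∀ i, 0 < (∑ j, v i j * y i j) - d i) →
      ∏ i, ((∑ j, v i j * y i j) - d i) ≤ ∏ i, ((∑ j, v i j * x i j) - d i)) := by
  have hx0 : ∀ i, 0 < bundleValue v x i := fun i => by
    have := hupos i
    have := hd i
    simp only [bundleValue]
    linarith
  have hlevel := sum_sublevel_bundleValue_le_of_isLocallyOptimal hv (d := d) ⟨hx, halloc⟩ hx0
  constructor
  · intro hlex y hy0 hy1 hypos
    refine prod_le_prod_of_sum_sublevel_le hupos (fun i => (hypos i).le)
      (hlevel (IsLocallyOptimal.of_forall_not_lexGt ?_) ⟨hy0, hy1⟩)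
    rintro _ ⟨y', hy', rfl⟩ hgt
    exact hlex ⟨y', hy'.1, hy'.2, hgt⟩
  · rintro hmnw ⟨y, hy0, hy1, hgt⟩
    refine not_lexGt_of_sum_sublevel_le
      (hlevel (IsLocallyOptimal.of_forall_prod_le hupos ?_) ⟨hy0, hy1⟩) hgt
    rintro _ ⟨y', hy', rfl⟩ hpos
    exact hmnw y' hy'.1 hy'.2 hpos

/-- With binary valuations and unit budgets, under the assumption that some
allocation gives every buyer strictly positive utility, an allocation with
positive utilities is leximin-optimal iff it maximizes the Nash welfare. -/
theorem leximin_iff_mnw_binary_unit_budget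
    (n m : ℕ) (v : Fin n → Fin m → ℝ) (d : Fin n → ℝ)
    (hv : ∀ i j, v i j = 0 ∨ v i j = 1) (hd : ∀ i, 0 ≤ d i)
    (hexist : ∃ y : Fin n → Fin m → ℝ, (∀ i j, 0 ≤ y i j) ∧
      (∀ j, ∑ i, y i j ≤ 1) ∧ (∀ i, 0 < (∑ j, v i j * y i j) - d i))
    (x : Fin n → Fin m → ℝ)
    (hx : ∀ i j, 0 ≤ x i j) (halloc : ∀ j, ∑ i, x i j ≤ 1)
    (hupos : ∀ i, 0 < (∑ j, v i j * x i j) - d i) :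
    (¬ ∃ y : Fin n → Fin m → ℝ, (∀ i j, 0 ≤ y i j) ∧ (∀ j, ∑ i, y i j ≤ 1) ∧
        LexGt (fun i => (∑ j, v i j * y i j) - d i)
          (fun i => (∑ j, v i j * x i j) - d i))
    ↔
    (∀ y : Fin n → Fin m → ℝ, (∀ i j, 0 ≤ y i j) → (∀ j, ∑ i, y i j ≤ 1) →
      (∀ i, 0 < (∑ j, v i j * y i j) - d i) →
      ∏ i, ((∑ j, v i j * y i j) - d i) ≤ ∏ i, ((∑ j, v i j * x i j) - d i)) :=
  leximin_iff_mnw_binary_unit_budget_general n m v d hv hd x hx halloc hupos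
end

section
/- There is a unique a* ∈ (1/10, 9/5) satisfying a* − 1/10 = (9/5 − a*)^2; this a* is the unique maximizer over (1/10, 9/5) of the function g(a) = min{(a − 1/10)^{1/10}, (9/5 − a)^{1/5}}; and a* ≠ 2/3. In particular, since a = 2/3 is the unique maximizer of (1/10)·log(a − 1/10) + (1/5)·log(9/5 − a) on this interval, the budget-weighted Eisenberg–Gale allocation and the leximin-optimal allocation differ in this instance with binary valuations and budgets equal to demands. -/
/-- The leximin objective of the two-buyer instance: the minimum of the
budget-weighted utilities `(a − 0.1)^{0.1}` and `(1.8 − a)^{0.2}`. -/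
noncomputable def lexObj (a : ℝ) : ℝ :=
  min ((a - 1/10) ^ ((1 : ℝ)/10)) ((9/5 - a) ^ ((1 : ℝ)/5))

lemma lexObj_key (a : ℝ) (ha1 : (0:ℝ) < a - 1/10) (ha2 : (0:ℝ) < 9/5 - a)
    (heq : a - 1/10 = (9/5 - a) ^ 2) :
    (∀ b ∈ Set.Ioo (1/10 : ℝ) (9/5), lexObj b ≤ lexObj a) ∧
    (∀ b ∈ Set.Ioo (1/10 : ℝ) (9/5), lexObj b = lexObj a → b = a) := by
  have hval : ((a - 1/10) ^ ((1:ℝ)/10)) = (9/5 - a) ^ ((1:ℝ)/5) := by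
    rw [heq, ← Real.rpow_natCast (9/5 - a) 2, ← Real.rpow_mul ha2.le]
    norm_num
  have hstrict : ∀ b ∈ Set.Ioo (1/10 : ℝ) (9/5), b ≠ a → lexObj b < lexObj a := by
    intro b hb hne
    rcases lt_or_gt_of_ne hne with h | h
    · calc lexObj b ≤ (b - 1/10) ^ ((1:ℝ)/10) := min_le_left _ _
        _ < (a - 1/10) ^ ((1:ℝ)/10) :=
          Real.rpow_lt_rpow (by linarith [hb.1]) (by linarith) (by norm_num)
        _ = lexObj a := by rw [lexObj, hval, min_self, ← hval]
    · calc lexObj b ≤ (9/5 - b) ^ ((1:ℝ)/5) := min_le_right _ _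
        _ < (9/5 - a) ^ ((1:ℝ)/5) :=
          Real.rpow_lt_rpow (by linarith [hb.2]) (by linarith) (by norm_num)
        _ = lexObj a := by rw [lexObj, hval, min_self]
  constructor
  · intro b hb
    rcases eq_or_ne b a with h | h
    · rw [h]
    · exact (hstrict b hb h).le
  · intro b hb hbeq
    by_contra hne
    exact absurd hbeq (hstrict b hb hne).ne

/-- There is a unique `a* ∈ (1/10, 9/5)` with `a* − 1/10 = (9/5 − a*)²`; it is
the unique maximizer of `a ↦ min((a − 1/10)^{1/10}, (9/5 − a)^{1/5})` on
`(1/10, 9/5)`; and `a* ≠ 2/3`, so the leximin-optimal allocation differs from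
the budget-weighted Eisenberg–Gale allocation in this instance. -/
theorem leximin_maximizer_ne_eg_maximizer :
    ∃ a : ℝ, a ∈ Set.Ioo (1/10 : ℝ) (9/5) ∧
      a - 1/10 = (9/5 - a) ^ 2 ∧
      (∀ b ∈ Set.Ioo (1/10 : ℝ) (9/5), b - 1/10 = (9/5 - b) ^ 2 → b = a) ∧
      (∀ b ∈ Set.Ioo (1/10 : ℝ) (9/5), lexObj b ≤ lexObj a) ∧
      (∀ b ∈ Set.Ioo (1/10 : ℝ) (9/5), lexObj b = lexObj a → b = a) ∧
      a ≠ 2/3 := by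
  have hs2 : Real.sqrt (39/5) ^ 2 = 39/5 := Real.sq_sqrt (by norm_num)
  have hslb : (2.79 : ℝ) < Real.sqrt (39/5) := by
    rw [show (2.79:ℝ) = Real.sqrt (2.79^2) from (Real.sqrt_sq (by norm_num)).symm]
    exact Real.sqrt_lt_sqrt (by positivity) (by norm_num)
  have hsub : Real.sqrt (39/5) < (2.8 : ℝ) := by
    rw [show (2.8:ℝ) = Real.sqrt (2.8^2) from (Real.sqrt_sq (by norm_num)).symm]
    exact Real.sqrt_lt_sqrt (by positivity) (by norm_num)
  obtain ⟨hmax, huniq⟩ := lexObj_key (23/10 - Real.sqrt (39/5)/2)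
    (by nlinarith) (by nlinarith) (by nlinarith)
  refine ⟨23/10 - Real.sqrt (39/5)/2, ⟨by nlinarith, by nlinarith⟩, by nlinarith,
    ?_, hmax, huniq, ?_⟩
  · intro b hb heq
    nlinarith [hb.2]
  · intro h
    have : Real.sqrt (39/5) = 49/15 := by linarith [sub_eq_iff_eq_add.mp h]
    nlinarith
end

section
/- In the multi-period model, suppose x = (x_{ij}^t) ∈ ℝ_{≥0}^{n×m×T} satisfies u_i := Σ_t Σ_j v_{ij} x_{ij}^t − d_i > 0 for all i, and λ_j^t ≥ 0, λ_j ≥ 0 are multipliers such that for all i, j, t one has B_i · v_{ij}/u_i ≤ λ_j^t + λ_j, with equality whenever x_{ij}^t > 0. Setting prices p_j^t = λ_j^t + λ_j, every buyer spends exactly their demand-inflated budget: Σ_t Σ_j x_{ij}^t p_j^t = B_i · (1 + d_i/u_i) for every i. -/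
open Finset

/-! By complementary slackness a unit of item `j` that buyer `i` actually buys costs `B i * v i j / u i`, so
the spending is `B i / u i * (u i + d i)`. -/

theorem Finset.sum_mul_eq_mul_sum_of_pos_imp {ι R : Type*} [CommSemiring R] [PartialOrder R]
    (s : Finset ι) (x p w : ι → R) (c : R) (hx : ∀ k ∈ s, 0 ≤ x k)
    (hcs : ∀ k ∈ s, 0 < x k → p k = c * w k) :
    ∑ k ∈ s, x k * p k = c * ∑ k ∈ s, w k * x k := by
  rw [mul_sum]
  refine sum_congr rfl fun k hk => ?_
  rcases (hx k hk).lt_or_eq with hpos | hzero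
  · rw [hcs k hk hpos]; ring
  · simp [← hzero]

theorem multi_period_demand_inflated_budget_general
    (n m T : ℕ) (v : Fin n → Fin m → ℝ) (B d : Fin n → ℝ)
    (x : Fin n → Fin m → Fin T → ℝ)
    (lam : Fin m → Fin T → ℝ) (mu : Fin m → ℝ)
    (hx : ∀ i j t, 0 ≤ x i j t)
    (hu : ∀ i, 0 < (∑ t, ∑ j, v i j * x i j t) - d i)
    (hcs : ∀ i j t, 0 < x i j t →
      B i * v i j / ((∑ t', ∑ j', v i j' * x i j' t') - d i) = lam j t + mu j) :
    ∀ i, ∑ t, ∑ j, x i j t * (lam j t + mu j)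
      = B i * (1 + d i / ((∑ t', ∑ j', v i j' * x i j' t') - d i)) := by
  intro i
  set u := (∑ t', ∑ j', v i j' * x i j' t') - d i with hu_def
  have hspend : ∀ t, ∑ j, x i j t * (lam j t + mu j) = B i / u * ∑ j, v i j * x i j t :=
    fun t => sum_mul_eq_mul_sum_of_pos_imp _ _ _ _ _ (fun j _ => hx i j t)
      fun j _ hpos => by rw [← hcs i j t hpos, mul_div_right_comm]
  calc ∑ t, ∑ j, x i j t * (lam j t + mu j)
      = B i / u * (u + d i) := by rw [sum_congr rfl fun t _ => hspend t, ← mul_sum, hu_def,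
        sub_add_cancel]
    _ = B i * (1 + d i / u) := by rw [one_add_div (hu i).ne', div_mul_eq_mul_div, mul_div_assoc]

/-- In the multi-period sum-utility model, under the KKT stationarity and
complementary-slackness conditions, with prices `p j t = lam j t + mu j`,
every buyer spends exactly their demand-inflated budget. -/
theorem multi_period_demand_inflated_budget
    (n m T : ℕ) (v : Fin n → Fin m → ℝ) (B d : Fin n → ℝ)
    (x : Fin n → Fin m → Fin T → ℝ)
    (lam : Fin m → Fin T → ℝ) (mu : Fin m → ℝ)
    (hv : ∀ i j, 0 ≤ v i j) (hB : ∀ i, 0 < B i) (hd : ∀ i, 0 ≤ d i)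
    (hx : ∀ i j t, 0 ≤ x i j t)
    (hlam : ∀ j t, 0 ≤ lam j t) (hmu : ∀ j, 0 ≤ mu j)
    (hu : ∀ i, 0 < (∑ t, ∑ j, v i j * x i j t) - d i)
    (hkkt : ∀ i j t,
      B i * v i j / ((∑ t', ∑ j', v i j' * x i j' t') - d i) ≤ lam j t + mu j)
    (hcs : ∀ i j t, 0 < x i j t →
      B i * v i j / ((∑ t', ∑ j', v i j' * x i j' t') - d i) = lam j t + mu j) :
    ∀ i, ∑ t, ∑ j, x i j t * (lam j t + mu j)
      = B i * (1 + d i / ((∑ t', ∑ j', v i j' * x i j' t') - d i)) :=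
  multi_period_demand_inflated_budget_general n m T v B d x lam mu hx hu hcs
end

section
/- In the multi-period model, suppose x ∈ ℝ_{≥0}^{n×m×T} satisfies the per-period and overall supply constraints with u_i := Σ_t Σ_j v_{ij} x_{ij}^t − d_i > 0 for all i, and λ_j^t ≥ 0, λ_j ≥ 0 satisfy: (a) for all i, j, t, B_i · v_{ij}/u_i ≤ λ_j^t + λ_j, with equality whenever x_{ij}^t > 0; (b) λ_j^t > 0 implies Σ_i x_{ij}^t = s_j^t; and (c) λ_j > 0 implies Σ_t Σ_i x_{ij}^t = s_j. Set p_j^t = λ_j^t + λ_j. Then (x, p) is a market equilibrium in the generalized sense: (i) for every buyer i and every y ∈ ℝ_{≥0}^{m×T} with Σ_t Σ_j v_{ij} y_j^t − d_i > 0 and Σ_t Σ_j p_j^t y_j^t ≤ B_i · (1 + d_i/(Σ_t Σ_j v_{ij} y_j^t − d_i)), we have Σ_t Σ_j v_{ij} y_j^t − d_i ≤ u_i; and (ii) p_j^t > 0 implies Σ_i x_{ij}^t = s_j^t or Σ_t Σ_i x_{ij}^t = s_j. -/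
open Finset

/-!
Against the prices `p j t = lam j t + mu j`, the KKT inequality says every unit of item `j`
at time `t` costs buyer `i` at least `B i / u i` times its value. Hence any bundle `y` of
total value `S` costs at least `B i * S / u i`, while the inflated budget equals
`B i * S / (S - d i)`; comparing the two gives `S - d i ≤ u i`. Market clearing holds because a
positive price forces one of its two multipliers to be positive, and complementary
slackness then makes the matching supply constraint tight.
-/

lemma mul_sum_sum_le_sum_sum_of_mul_le {ι κ : Type*} [Fintype ι] [Fintype κ]
    {c : ℝ} {w : κ → ℝ} {p y : κ → ι → ℝ}
    (hp : ∀ j t, c * w j ≤ p j t) (hy : ∀ j t, 0 ≤ y j t) :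
    c * ∑ t, ∑ j, w j * y j t ≤ ∑ t, ∑ j, p j t * y j t := by
  simp only [mul_sum, ← mul_assoc]
  exact sum_le_sum fun t _ => sum_le_sum fun j _ =>
    mul_le_mul_of_nonneg_right (hp j t) (hy j t)

lemma one_add_div_sub_self {S d : ℝ} (h : S - d ≠ 0) : 1 + d / (S - d) = S / (S - d) := by
  rw [one_add_div h, sub_add_cancel]

lemma sub_le_of_div_mul_le_mul_one_add_div {B d S u : ℝ} (hB : 0 < B) (hd : 0 ≤ d)
    (hu : 0 < u) (hSd : 0 < S - d) (h : B / u * S ≤ B * (1 + d / (S - d))) :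
    S - d ≤ u := by
  have hBS : 0 < B * S := mul_pos hB (by linarith)
  rw [one_add_div_sub_self hSd.ne', ← mul_div_assoc, div_mul_eq_mul_div] at h
  exact (div_le_div_iff_of_pos_left hBS hu hSd).mp h

lemma pos_or_pos_of_add_pos {a b : ℝ} (h : 0 < a + b) : 0 < a ∨ 0 < b := by
  by_contra! hab
  linarith [hab.1, hab.2]

theorem multi_period_market_equilibrium_general
    (n m T : ℕ) (v : Fin n → Fin m → ℝ) (B d : Fin n → ℝ)
    (st : Fin m → Fin T → ℝ) (s : Fin m → ℝ)
    (x : Fin n → Fin m → Fin T → ℝ)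
    (lam : Fin m → Fin T → ℝ) (mu : Fin m → ℝ)
    (hB : ∀ i, 0 < B i) (hd : ∀ i, 0 ≤ d i)
    (hu : ∀ i, 0 < (∑ t, ∑ j, v i j * x i j t) - d i)
    (hkkt : ∀ i j t,
      B i * v i j / ((∑ t', ∑ j', v i j' * x i j' t') - d i) ≤ lam j t + mu j)
    (hcs_t : ∀ j t, 0 < lam j t → ∑ i, x i j t = st j t)
    (hcs_o : ∀ j, 0 < mu j → ∑ t, ∑ i, x i j t = s j) :
    (∀ i, ∀ y : Fin m → Fin T → ℝ, (∀ j t, 0 ≤ y j t) →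
      0 < (∑ t, ∑ j, v i j * y j t) - d i →
      (∑ t, ∑ j, (lam j t + mu j) * y j t)
        ≤ B i * (1 + d i / ((∑ t, ∑ j, v i j * y j t) - d i)) →
      (∑ t, ∑ j, v i j * y j t) - d i
        ≤ (∑ t, ∑ j, v i j * x i j t) - d i) ∧
    (∀ j t, 0 < lam j t + mu j →
      (∑ i, x i j t = st j t) ∨ (∑ t', ∑ i, x i j t' = s j)) := by
  refine ⟨fun i y hy hyu hbudget => ?_, fun j t hp => ?_⟩
  · have hcost := mul_sum_sum_le_sum_sum_of_mul_le
      (fun j t => (mul_div_right_comm (B i) (v i j) _).symm.trans_le (hkkt i j t)) hy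
    exact sub_le_of_div_mul_le_mul_one_add_div (hB i) (hd i) (hu i) hyu (hcost.trans hbudget)
  · rcases pos_or_pos_of_add_pos hp with hlam | hmu
    · exact Or.inl (hcs_t j t hlam)
    · exact Or.inr (hcs_o j hmu)

/-- In the multi-period sum-utility model, a KKT point of the Eisenberg–Gale
program with per-period and overall supply constraints forms, with prices
`p j t = lam j t + mu j`, a market equilibrium in the generalized sense:
(i) every buyer's bundle maximizes utility over the demand-inflated budget
set, and (ii) an item has positive price at time `t` only if it is
supply-constrained at some layer of its supply hierarchy. -/
theorem multi_period_market_equilibrium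
    (n m T : ℕ) (v : Fin n → Fin m → ℝ) (B d : Fin n → ℝ)
    (st : Fin m → Fin T → ℝ) (s : Fin m → ℝ)
    (x : Fin n → Fin m → Fin T → ℝ)
    (lam : Fin m → Fin T → ℝ) (mu : Fin m → ℝ)
    (hv : ∀ i j, 0 ≤ v i j) (hB : ∀ i, 0 < B i) (hd : ∀ i, 0 ≤ d i)
    (hx : ∀ i j t, 0 ≤ x i j t)
    (hsupt : ∀ j t, ∑ i, x i j t ≤ st j t)
    (hsup : ∀ j, ∑ t, ∑ i, x i j t ≤ s j)
    (hlam : ∀ j t, 0 ≤ lam j t) (hmu : ∀ j, 0 ≤ mu j)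
    (hu : ∀ i, 0 < (∑ t, ∑ j, v i j * x i j t) - d i)
    (hkkt : ∀ i j t,
      B i * v i j / ((∑ t', ∑ j', v i j' * x i j' t') - d i) ≤ lam j t + mu j)
    (hcs : ∀ i j t, 0 < x i j t →
      B i * v i j / ((∑ t', ∑ j', v i j' * x i j' t') - d i) = lam j t + mu j)
    (hcs_t : ∀ j t, 0 < lam j t → ∑ i, x i j t = st j t)
    (hcs_o : ∀ j, 0 < mu j → ∑ t, ∑ i, x i j t = s j) :
    (∀ i, ∀ y : Fin m → Fin T → ℝ, (∀ j t, 0 ≤ y j t) →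
      0 < (∑ t, ∑ j, v i j * y j t) - d i →
      (∑ t, ∑ j, (lam j t + mu j) * y j t)
        ≤ B i * (1 + d i / ((∑ t, ∑ j, v i j * y j t) - d i)) →
      (∑ t, ∑ j, v i j * y j t) - d i
        ≤ (∑ t, ∑ j, v i j * x i j t) - d i) ∧
    (∀ j t, 0 < lam j t + mu j →
      (∑ i, x i j t = st j t) ∨ (∑ t', ∑ i, x i j t' = s j)) :=
  multi_period_market_equilibrium_general n m T v B d st s x lam mu hB hd hu hkkt hcs_t hcs_o
end

section
/- In the multi-period model with binary valuations (v_{ij} ∈ {0,1}) and unit budgets, assume every item j has at least one buyer i with v_{ij} = 1, and assume there exists a feasible allocation with u_i > 0 for all i. Then every allocation x maximizing the Nash welfare Π_i u_i(x_i), and every leximin-optimal allocation x, satisfies Σ_i u_i(x_i) = Σ_j min(s_j, Σ_t s_j^t) − Σ_i d_i; that is, the total utility of any such optimal allocation equals the total effective supply minus the total demand. -/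
open Finset

/-- Feasibility of a multi-period allocation: nonnegativity, per-period supply
constraints, and overall supply constraints. -/
def FeasibleMP (n m T : ℕ) (st : Fin m → Fin T → ℝ) (s : Fin m → ℝ)
    (x : Fin n → Fin m → Fin T → ℝ) : Prop :=
  (∀ i j t, 0 ≤ x i j t) ∧ (∀ j t, ∑ i, x i j t ≤ st j t) ∧
    (∀ j, ∑ t, ∑ i, x i j t ≤ s j)

lemma sortedVal_mono {n : ℕ} {v w : Fin n → ℝ} (h : ∀ i, w i ≤ v i) (k : Fin n) :
    sortedVal w k ≤ sortedVal v k := by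
  set σ := Tuple.sort v with hσ
  set τ := Tuple.sort w with hτ
  set A : Finset (Fin n) := (Finset.Iic k).image σ with hA
  set B : Finset (Fin n) := (Finset.Ici k).image τ with hB
  have hcardA : A.card = (k : ℕ) + 1 := by
    rw [hA, Finset.card_image_of_injective _ σ.injective, Fin.card_Iic]
  have hcardB : B.card = n - (k : ℕ) := by
    rw [hB, Finset.card_image_of_injective _ τ.injective, Fin.card_Ici]
  have hne : (A ∩ B).Nonempty := by
    rw [← Finset.card_pos]
    by_contra hc
    push_neg at hc
    interval_cases h' : (A ∩ B).card
    have h1 := Finset.card_union_add_card_inter A B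
    rw [h', hcardA, hcardB, Nat.add_zero] at h1
    have h2 : (A ∪ B).card ≤ n := by
      simpa using Finset.card_le_univ (A ∪ B)
    have h3 : (k : ℕ) < n := k.isLt
    omega
  obtain ⟨p, hp⟩ := hne
  rw [Finset.mem_inter] at hp
  obtain ⟨a, ha, hap⟩ := Finset.mem_image.mp hp.1
  obtain ⟨b, hb, hbp⟩ := Finset.mem_image.mp hp.2
  rw [Finset.mem_Iic] at ha
  rw [Finset.mem_Ici] at hb
  have h1 : sortedVal w k ≤ w p := by
    rw [← hbp]; exact Tuple.monotone_sort w hb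
  have h2 : v p ≤ sortedVal v k := by
    rw [← hap]; exact Tuple.monotone_sort v ha
  exact le_trans h1 (le_trans (h p) h2)

lemma lexGt_of_pointwise {n : ℕ} {v w : Fin n → ℝ} (hle : ∀ i, w i ≤ v i)
    (hlt : ∃ i, w i < v i) : LexGt v w := by
  obtain ⟨i1, hi1⟩ := hlt
  have hsum : ∑ i, w i < ∑ i, v i :=
    Finset.sum_lt_sum (fun i _ => hle i) ⟨i1, Finset.mem_univ i1, hi1⟩
  have hsv : ∑ i, sortedVal v i = ∑ i, v i := Equiv.sum_comp (Tuple.sort v) v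
  have hsw : ∑ i, sortedVal w i = ∑ i, w i := Equiv.sum_comp (Tuple.sort w) w
  have hsorted : ∑ i, sortedVal w i < ∑ i, sortedVal v i := by rw [hsv, hsw]; exact hsum
  set S : Finset (Fin n) := univ.filter (fun k => sortedVal w k < sortedVal v k) with hS
  have hSne : S.Nonempty := by
    by_contra hc
    rw [Finset.not_nonempty_iff_eq_empty] at hc
    have : ∀ k : Fin n, sortedVal w k = sortedVal v k := by
      intro k
      refine le_antisymm (sortedVal_mono hle k) ?_
      by_contra hk
      have : k ∈ S := by simp [hS, lt_of_not_ge hk]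
      simp [hc] at this
    rw [Finset.sum_congr rfl (fun k _ => this k)] at hsorted
    exact lt_irrefl _ hsorted
  refine ⟨S.min' hSne, ?_, ?_⟩
  · intro i hi
    refine le_antisymm ?_ (sortedVal_mono hle i)
    by_contra hk
    have hiS : i ∈ S := by simp [hS, lt_of_not_ge hk]
    exact absurd (S.min'_le i hiS) (not_le.mpr hi)
  · have := S.min'_mem hSne
    simp [hS] at this
    exact this
lemma improveMP (n m T : ℕ) (v : Fin n → Fin m → ℝ)
    (st : Fin m → Fin T → ℝ) (s : Fin m → ℝ)
    (hv : ∀ i j, v i j = 0 ∨ v i j = 1)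
    (hcover : ∀ j, ∃ i, v i j = 1)
    (x : Fin n → Fin m → Fin T → ℝ) (hxf : FeasibleMP n m T st s x)
    (hlt : ∑ j, ∑ t, ∑ i, v i j * x i j t < ∑ j, min (s j) (∑ t, st j t)) :
    ∃ y, FeasibleMP n m T st s y ∧
      (∀ i, (∑ t, ∑ j, v i j * x i j t) ≤ ∑ t, ∑ j, v i j * y i j t) ∧
      (∃ i, (∑ t, ∑ j, v i j * x i j t) < ∑ t, ∑ j, v i j * y i j t) := by
  obtain ⟨hx0, hxp, hxs⟩ := hxf
  have hv0 : ∀ i j t, 0 ≤ v i j * x i j t := by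
    intro i j t; rcases hv i j with h | h <;> simp [h, hx0 i j t]
  have hvle : ∀ i j t, v i j * x i j t ≤ x i j t := by
    intro i j t; rcases hv i j with h | h <;> simp [h, hx0 i j t]
  obtain ⟨j0, _, hj0⟩ := Finset.exists_lt_of_sum_lt hlt
  obtain ⟨i0, hi0⟩ := hcover j0
  set val : ℝ := ∑ t, ∑ i, v i j0 * x i j0 t with hval
  have hAs : val < s j0 := lt_of_lt_of_le hj0 (min_le_left _ _)
  have hAt : val < ∑ t, st j0 t := lt_of_lt_of_le hj0 (min_le_right _ _)
  obtain ⟨t0, _, ht0⟩ := Finset.exists_lt_of_sum_lt hAt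
  set δ : ℝ := min (st j0 t0 - ∑ i, v i j0 * x i j0 t0) (s j0 - val) with hδdef
  have hδ : 0 < δ := lt_min (by linarith) (by linarith)
  set y : Fin n → Fin m → Fin T → ℝ := fun i j t =>
    if j = j0 then v i j0 * x i j0 t + (if i = i0 ∧ t = t0 then δ else 0)
    else x i j t with hy
  have hfy : FeasibleMP n m T st s y := by
    refine ⟨?_, ?_, ?_⟩
    · intro i j t
      simp only [hy]
      split_ifs with h1 h2
      · have := hv0 i j0 t; linarith
      · have := hv0 i j0 t; linarith
      · exact hx0 i j t
    · intro j t
      simp only [hy]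
      by_cases hj : j = j0
      · subst hj
        simp only [eq_self_iff_true, if_true]
        rw [Finset.sum_add_distrib]
        have h1 : ∑ i, (if i = i0 ∧ t = t0 then δ else 0) =
            if t = t0 then δ else 0 := by
          by_cases ht : t = t0 <;> simp [ht]
        rw [h1]
        by_cases ht : t = t0
        · subst ht
          have := min_le_left (st j t - ∑ i, v i j * x i j t) (s j - val)
          simp only [eq_self_iff_true, if_true]
          linarith
        · simp only [if_neg ht, add_zero]
          calc ∑ i, v i j * x i j t ≤ ∑ i, x i j t :=
                Finset.sum_le_sum fun i _ => hvle i j t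
            _ ≤ st j t := hxp j t
      · simp only [if_neg hj]; exact hxp j t
    · intro j
      simp only [hy]
      by_cases hj : j = j0
      · subst hj
        simp only [eq_self_iff_true, if_true]
        have : ∑ t, ∑ i, (v i j * x i j t + (if i = i0 ∧ t = t0 then δ else 0))
            = val + δ := by
          simp_rw [Finset.sum_add_distrib]
          rw [hval]
          congr 1
          have h1 : ∀ t : Fin T, ∑ i, (if i = i0 ∧ t = t0 then δ else 0) =
              if t = t0 then δ else 0 := by
            intro t; by_cases ht : t = t0 <;> simp [ht]
          simp_rw [h1]
          simp
        rw [this]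
        have := min_le_right (st j t0 - ∑ i, v i j * x i j t0) (s j - val)
        linarith
      · simp only [if_neg hj]; exact hxs j
  have hvv : ∀ i j, v i j * v i j = v i j := by
    intro i j; rcases hv i j with h | h <;> simp [h]
  have hyu : ∀ i j t, v i j * y i j t = v i j * x i j t +
      (if i = i0 ∧ j = j0 ∧ t = t0 then δ else 0) := by
    intro i j t
    simp only [hy]
    by_cases hj : j = j0
    · subst hj
      simp only [eq_self_iff_true, if_true, true_and, and_true]
      by_cases hi : i = i0
      · subst hi
        by_cases ht : t = t0 <;> simp [ht, hi0]
      · simp [hi, mul_add, ← mul_assoc, hvv]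
    · simp [hj]
  have hUy : ∀ i, ∑ t, ∑ j, v i j * y i j t =
      (∑ t, ∑ j, v i j * x i j t) + (if i = i0 then δ else 0) := by
    intro i
    simp_rw [hyu, Finset.sum_add_distrib]
    congr 1
    by_cases hi : i = i0
    · subst hi
      simp only [true_and, if_pos rfl]
      have h1 : ∀ t : Fin T, ∑ j, (if j = j0 ∧ t = t0 then δ else 0) =
          if t = t0 then δ else 0 := by
        intro t; by_cases ht : t = t0 <;> simp [ht]
      simp_rw [h1]
      simp
    · simp [hi]
  refine ⟨y, hfy, ?_, ⟨i0, ?_⟩⟩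
  · intro i
    rw [hUy i]
    by_cases hi : i = i0 <;> simp [hi] <;> linarith
  · rw [hUy i0]
    simp [hδ]
lemma sum_swap_util (n m T : ℕ) (v : Fin n → Fin m → ℝ)
    (z : Fin n → Fin m → Fin T → ℝ) :
    ∑ i, ∑ t, ∑ j, v i j * z i j t = ∑ j, ∑ t, ∑ i, v i j * z i j t := by
  rw [Finset.sum_comm]
  have h : ∀ t : Fin T, ∑ i, ∑ j, v i j * z i j t = ∑ j, ∑ i, v i j * z i j t :=
    fun t => Finset.sum_comm
  simp_rw [h]
  exact Finset.sum_comm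

/-- In the multi-period sum-utility model with binary valuations and unit
budgets, if every item is valued by some buyer and some feasible allocation
gives every buyer positive utility, then every Nash-welfare-maximizing
allocation and every leximin-optimal allocation has total utility
`∑ j, min(s j, ∑ t, st j t) − ∑ i, d i`. -/
theorem optimal_total_utility_multi_period
    (n m T : ℕ) (v : Fin n → Fin m → ℝ) (d : Fin n → ℝ)
    (st : Fin m → Fin T → ℝ) (s : Fin m → ℝ)
    (hv : ∀ i j, v i j = 0 ∨ v i j = 1) (hd : ∀ i, 0 ≤ d i)
    (hcover : ∀ j, ∃ i, v i j = 1)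
    (hexist : ∃ y, FeasibleMP n m T st s y ∧
      ∀ i, 0 < (∑ t, ∑ j, v i j * y i j t) - d i)
    (x : Fin n → Fin m → Fin T → ℝ) (hxf : FeasibleMP n m T st s x) :
    (((∀ i, 0 < (∑ t, ∑ j, v i j * x i j t) - d i) ∧
      (∀ y, FeasibleMP n m T st s y →
        (∀ i, 0 < (∑ t, ∑ j, v i j * y i j t) - d i) →
        ∏ i, ((∑ t, ∑ j, v i j * y i j t) - d i)
          ≤ ∏ i, ((∑ t, ∑ j, v i j * x i j t) - d i))) →
      ∑ i, ((∑ t, ∑ j, v i j * x i j t) - d i)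
        = (∑ j, min (s j) (∑ t, st j t)) - ∑ i, d i) ∧
    ((¬ ∃ y, FeasibleMP n m T st s y ∧
        LexGt (fun i => (∑ t, ∑ j, v i j * y i j t) - d i)
          (fun i => (∑ t, ∑ j, v i j * x i j t) - d i)) →
      ∑ i, ((∑ t, ∑ j, v i j * x i j t) - d i)
        = (∑ j, min (s j) (∑ t, st j t)) - ∑ i, d i) := by
  -- per-item upper bound on valued allocation, for any feasible z
  have hbound : ∀ z, FeasibleMP n m T st s z →
      ∑ j, ∑ t, ∑ i, v i j * z i j t ≤ ∑ j, min (s j) (∑ t, st j t) := by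
    intro z ⟨hz0, hzp, hzs⟩
    refine Finset.sum_le_sum fun j _ => le_min ?_ ?_
    · calc ∑ t, ∑ i, v i j * z i j t
          ≤ ∑ t, ∑ i, z i j t := by
            refine Finset.sum_le_sum fun t _ => Finset.sum_le_sum fun i _ => ?_
            rcases hv i j with h | h <;> simp [h, hz0 i j t]
        _ ≤ s j := hzs j
    · refine Finset.sum_le_sum fun t _ => ?_
      calc ∑ i, v i j * z i j t ≤ ∑ i, z i j t := by
            refine Finset.sum_le_sum fun i _ => ?_
            rcases hv i j with h | h <;> simp [h, hz0 i j t]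
        _ ≤ st j t := hzp j t
  have hsplit : ∀ z : Fin n → Fin m → Fin T → ℝ,
      ∑ i, ((∑ t, ∑ j, v i j * z i j t) - d i)
        = (∑ j, ∑ t, ∑ i, v i j * z i j t) - ∑ i, d i := by
    intro z
    rw [Finset.sum_sub_distrib, sum_swap_util]
  constructor
  · rintro ⟨hpos, hmax⟩
    rw [hsplit x]
    congr 1
    refine le_antisymm (hbound x hxf) ?_
    by_contra hc
    push_neg at hc
    obtain ⟨y, hyf, hyle, i1, hi1⟩ := improveMP n m T v st s hv hcover x hxf hc
    have hypos : ∀ i, 0 < (∑ t, ∑ j, v i j * y i j t) - d i := by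
      intro i; have := hyle i; have := hpos i; linarith
    have hlt : ∏ i, ((∑ t, ∑ j, v i j * x i j t) - d i)
        < ∏ i, ((∑ t, ∑ j, v i j * y i j t) - d i) := by
      refine Finset.prod_lt_prod (fun i _ => hpos i)
        (fun i _ => by have := hyle i; linarith)
        ⟨i1, Finset.mem_univ i1, by have := hi1; linarith⟩
    exact absurd (hmax y hyf hypos) (not_le.mpr hlt)
  · intro hno
    rw [hsplit x]
    congr 1
    refine le_antisymm (hbound x hxf) ?_
    by_contra hc
    push_neg at hc
    obtain ⟨y, hyf, hyle, i1, hi1⟩ := improveMP n m T v st s hv hcover x hxf hc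
    refine hno ⟨y, hyf, lexGt_of_pointwise ?_ ?_⟩
    · intro i; simpa using sub_le_sub_right (hyle i) (d i)
    · exact ⟨i1, by simpa using sub_lt_sub_right hi1 (d i1)⟩
end

section
/- In the multi-period model with per-period demands, suppose x ∈ ℝ_{≥0}^{n×m×T} satisfies u_i^t := Σ_j v_{ij} x_{ij}^t − d_i^t > 0 for all i and t, and λ_j^t ≥ 0, λ_j ≥ 0 are multipliers such that for all i, j, t one has (B_i/T) · v_{ij}/u_i^t ≤ λ_j^t + λ_j, with equality whenever x_{ij}^t > 0. Setting prices p_j^t = λ_j^t + λ_j, every buyer spends exactly their demand-inflated budget: Σ_t Σ_j x_{ij}^t p_j^t = B_i · (1/T) · Σ_t (1 + d_i^t/u_i^t) for every buyer i. -/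
open Finset

/-!
By complementary slackness the price of every good a buyer receives in period `t` is
`(B_i/T) v_ij / u_i^t`, so the period's spending is `(B_i/T)/u_i^t · Σ_j v_ij x_ij^t`.
Since `Σ_j v_ij x_ij^t = u_i^t + d_i^t`, this is `(B_i/T)(1 + d_i^t/u_i^t)`; sum over `t`.
-/

theorem sum_mul_eq_sum_mul_of_pos_imp_eq {ι : Type*} [Fintype ι] {x a p : ι → ℝ}
    (hx : ∀ j, 0 ≤ x j) (h : ∀ j, 0 < x j → a j = p j) :
    ∑ j, x j * p j = ∑ j, x j * a j := by
  refine sum_congr rfl fun j _ => ?_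
  rcases (hx j).eq_or_lt with hzero | hpos
  · simp [← hzero]
  · rw [h j hpos]

theorem sum_mul_price_eq_mul_one_add_div {ι : Type*} [Fintype ι] {x v p : ι → ℝ} {c d : ℝ}
    (hx : ∀ j, 0 ≤ x j) (hu : ∑ j, v j * x j - d ≠ 0)
    (hcs : ∀ j, 0 < x j → c * v j / (∑ j', v j' * x j' - d) = p j) :
    ∑ j, x j * p j = c * (1 + d / (∑ j, v j * x j - d)) := by
  set u := ∑ j, v j * x j - d with hu_def
  calc ∑ j, x j * p j = ∑ j, x j * (c * v j / u) := sum_mul_eq_sum_mul_of_pos_imp_eq hx hcs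
    _ = c / u * ∑ j, v j * x j := by
      rw [mul_sum]
      exact sum_congr rfl fun j _ => by ring
    _ = c / u * (u + d) := by rw [hu_def, sub_add_cancel]
    _ = c * (1 + d / u) := by field_simp

theorem geo_mean_demand_inflated_budget_general
    (n m T : ℕ)
    (v : Fin n → Fin m → ℝ) (B : Fin n → ℝ) (d : Fin n → Fin T → ℝ)
    (x : Fin n → Fin m → Fin T → ℝ)
    (lam : Fin m → Fin T → ℝ) (mu : Fin m → ℝ)
    (hx : ∀ i j t, 0 ≤ x i j t)
    (hu : ∀ i t, 0 < (∑ j, v i j * x i j t) - d i t)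
    (hcs : ∀ i j t, 0 < x i j t →
      (B i / T) * v i j / ((∑ j', v i j' * x i j' t) - d i t) = lam j t + mu j) :
    ∀ i, ∑ t, ∑ j, x i j t * (lam j t + mu j)
      = B i * ((1 / T) *
          ∑ t, (1 + d i t / ((∑ j', v i j' * x i j' t) - d i t))) := by
  intro i
  calc ∑ t, ∑ j, x i j t * (lam j t + mu j)
      = ∑ t, B i / T * (1 + d i t / ((∑ j', v i j' * x i j' t) - d i t)) :=
        sum_congr rfl fun t _ =>
          sum_mul_price_eq_mul_one_add_div (fun j => hx i j t) (hu i t).ne' (fun j => hcs i j t)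
    _ = _ := by
      rw [← mul_sum]
      ring

/-- In the multi-period geometric-mean-utility model with per-period demands,
under the KKT stationarity and complementary-slackness conditions, with prices
`p j t = lam j t + mu j`, every buyer spends exactly their demand-inflated
budget `B i * (1/T) * ∑ t, (1 + d i t / u i t)`. -/
theorem geo_mean_demand_inflated_budget
    (n m T : ℕ) (hT : 0 < T)
    (v : Fin n → Fin m → ℝ) (B : Fin n → ℝ) (d : Fin n → Fin T → ℝ)
    (x : Fin n → Fin m → Fin T → ℝ)
    (lam : Fin m → Fin T → ℝ) (mu : Fin m → ℝ)
    (hv : ∀ i j, 0 ≤ v i j) (hB : ∀ i, 0 < B i) (hd : ∀ i t, 0 ≤ d i t)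
    (hx : ∀ i j t, 0 ≤ x i j t)
    (hlam : ∀ j t, 0 ≤ lam j t) (hmu : ∀ j, 0 ≤ mu j)
    (hu : ∀ i t, 0 < (∑ j, v i j * x i j t) - d i t)
    (hkkt : ∀ i j t,
      (B i / T) * v i j / ((∑ j', v i j' * x i j' t) - d i t) ≤ lam j t + mu j)
    (hcs : ∀ i j t, 0 < x i j t →
      (B i / T) * v i j / ((∑ j', v i j' * x i j' t) - d i t) = lam j t + mu j) :
    ∀ i, ∑ t, ∑ j, x i j t * (lam j t + mu j)
      = B i * ((1 / T) *
          ∑ t, (1 + d i t / ((∑ j', v i j' * x i j' t) - d i t))) :=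
  geo_mean_demand_inflated_budget_general n m T v B d x lam mu hx hu hcs
end

section
/- In the multi-period model with per-period demands, binary valuations (v_{ij} ∈ {0,1}) and unit budgets (B_i = 1), assume there exists a feasible allocation with u_i^t > 0 for all i and t. Then a feasible allocation x with u_i^t(x_i^t) > 0 for all i, t maximizes Π_i Π_t u_i^t(x_i^t) over all feasible allocations (equivalently, maximizes the program EG-Time-geo-mean) if and only if it is leximin-optimal with respect to the vector (u_i^t(x_i^t))_{i∈[n], t∈[T]} of per-buyer-per-period utilities. -/
open Finset

/-- The vector of per-buyer-per-period utilities of a multi-period allocation,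
indexed by `Fin (n * T)`. -/
noncomputable def perPeriodUtilVec (n m T : ℕ) (v : Fin n → Fin m → ℝ)
    (d : Fin n → Fin T → ℝ) (x : Fin n → Fin m → Fin T → ℝ)
    (k : Fin (n * T)) : ℝ :=
  (∑ j, v (finProdFinEquiv.symm k).1 j * x (finProdFinEquiv.symm k).1 j
      (finProdFinEquiv.symm k).2) -
    d (finProdFinEquiv.symm k).1 (finProdFinEquiv.symm k).2

/-!
Both optimality notions are equivalent to one threshold property of `u = util x`: for every `c`,
no feasible allocation gives the agent-periods with `u ≤ c` more total utility than `x` does.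
The threshold property implies Nash optimality by Abel summation with the weights `1 / u`
(giving `∑ w / u ≤ card`) and AM–GM, and leximin optimality by comparing `∑ min (·, γ)` at a
suitable `γ`. Conversely, if it fails at `c`, a max-flow/min-cut argument in the exchange graph
(reassigning an item between agents within a period, using slack per-period or overall supply)
gives a feasible direction that raises one agent-period below `c`, at the expense of nothing or
of a single agent-period above `c`; with binary valuations every exchange moves utility
one-for-one. A small step along it improves both the product and the leximin order.
-/

open Filter Topology

namespace MultiPeriod

section Leximin

variable {N : ℕ}

lemma Monotone.le_iff_lt_card_filter_le {f : Fin N → ℝ} (hf : Monotone f) (γ : ℝ) (i : Fin N) :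
    f i ≤ γ ↔ (i : ℕ) < #{j | f j ≤ γ} := by
  constructor
  · intro hi
    have : Finset.Iic i ⊆ filter (fun j => f j ≤ γ) univ := fun j hj =>
      mem_filter.2 ⟨mem_univ j, (hf (mem_Iic.1 hj)).trans hi⟩
    have hcard := Finset.card_le_card this
    rw [Fin.card_Iic] at hcard
    omega
  · intro hi
    by_contra! hγ
    have : filter (fun j => f j ≤ γ) univ ⊆ Finset.Iio i := fun j hj =>
      mem_Iio.2 (hf.reflect_lt ((mem_filter.1 hj).2.trans_lt hγ))
    exact absurd hi (not_lt.2 ((Finset.card_le_card this).trans_eq (Fin.card_Iio i)))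

lemma sortedVal_le_iff (u : Fin N → ℝ) (γ : ℝ) (i : Fin N) :
    sortedVal u i ≤ γ ↔ (i : ℕ) < #{j | u j ≤ γ} := by
  rw [sortedVal, ← Function.comp_apply (f := u),
    Monotone.le_iff_lt_card_filter_le (Tuple.monotone_sort u)]
  exact Iff.of_eq (congrArg _ (card_equiv (Tuple.sort u) (by simp)))

lemma lexGt_of_lt_of_forall_ne {u w : Fin N → ℝ} (a : Fin N) (ha : u a < w a)
    (h : ∀ k, w k ≠ u k → u a ≤ u k ∧ u a < w k) : LexGt w u := by
  have hlow : ∀ γ < u a, (filter (fun k => w k ≤ γ) univ) = filter (fun k => u k ≤ γ) univ := by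
    intro γ hγ
    refine filter_congr fun k _ => ?_
    by_cases hk : w k = u k
    · rw [hk]
    · obtain ⟨h₁, h₂⟩ := h k hk
      constructor <;> intro <;> linarith
  have hsub : (filter (fun k => w k ≤ u a) univ) ⊂ filter (fun k => u k ≤ u a) univ := by
    refine ssubset_iff_of_subset (fun k hk => ?_) |>.2 ⟨a, by simp, by simp [ha]⟩
    have hk := (mem_filter.1 hk).2
    by_cases hwk : w k = u k
    · simpa [← hwk] using hk
    · exact absurd hk (not_le.2 (h k hwk).2)
  have hcard := card_lt_card hsub
  refine ⟨⟨_, hcard.trans_le (card_filter_le _ _ |>.trans_eq (card_fin N))⟩, fun i hi => ?_, ?_⟩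
  · have hw : sortedVal w i ≤ u a := (sortedVal_le_iff w _ i).2 hi
    have hu : sortedVal u i ≤ u a := (sortedVal_le_iff u _ i).2 ((Fin.lt_def.1 hi).trans hcard)
    have hiff : ∀ γ < u a, sortedVal w i ≤ γ ↔ sortedVal u i ≤ γ := fun γ hγ => by
      rw [sortedVal_le_iff, sortedVal_le_iff, hlow γ hγ]
    by_contra hne
    rcases lt_or_gt_of_ne hne with hlt | hlt
    · exact absurd ((hiff _ (hlt.trans_le hu)).1 le_rfl) (not_le.2 hlt)
    · exact absurd ((hiff _ (hlt.trans_le hw)).2 le_rfl) (not_le.2 hlt)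
  · refine ((sortedVal_le_iff u _ _).2 hcard).trans_lt (not_le.1 fun hw => ?_)
    exact lt_irrefl _ ((sortedVal_le_iff w _ _).1 hw)

lemma exists_sum_min_lt_of_lexGt {u w : Fin N → ℝ} (h : LexGt w u) :
    ∃ γ, ∑ k, min (u k) γ < ∑ k, min (w k) γ := by
  obtain ⟨k, heq, hlt⟩ := h
  set γ := sortedVal w k
  refine ⟨γ, ?_⟩
  rw [Fintype.sum_equiv (Tuple.sort u).symm (fun k => min (u k) γ)
      (fun i => min (sortedVal u i) γ) (by simp [sortedVal]),
    Fintype.sum_equiv (Tuple.sort w).symm (fun k => min (w k) γ)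
      (fun i => min (sortedVal w i) γ) (by simp [sortedVal])]
  refine sum_lt_sum (fun i _ => ?_) ⟨k, mem_univ k, ?_⟩
  · rcases lt_or_ge i k with hik | hki
    · rw [← heq i hik]
    · have : sortedVal w k ≤ sortedVal w i := Tuple.monotone_sort w hki
      rw [min_eq_right this]
      exact min_le_right _ _
  · rwa [min_eq_left hlt.le, min_self]

end Leximin

section Majorization

variable {ι : Type*}

/-- Abel summation along the level sets of `u`. -/
lemma sum_mul_nonneg_of_sublevel_sums_nonneg (u g f : ι → ℝ) (s : Finset ι)
    (hg₀ : ∀ p ∈ s, 0 ≤ g p) (hg : ∀ p ∈ s, ∀ q ∈ s, u p ≤ u q → g q ≤ g p)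
    (hf : ∀ q ∈ s, 0 ≤ ∑ p ∈ s with u p ≤ u q, f p) :
    0 ≤ ∑ p ∈ s, g p * f p := by
  induction s using Finset.strongInduction generalizing g with
  | H s ih =>
  rcases s.eq_empty_or_nonempty with rfl | hs
  · simp
  obtain ⟨q, hq, hmax⟩ := s.exists_max_image u hs
  set s' := s.filter fun p => u p < u q
  have hs' : s' ⊂ s := filter_ssubset.2 ⟨q, hq, lt_irrefl _⟩
  have htop : ∑ p ∈ s, (g p - g q) * f p = ∑ p ∈ s', (g p - g q) * f p := by
    refine (sum_subset (filter_subset _ _) fun p hp hps' => ?_).symm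
    have hpq : u p = u q := le_antisymm (hmax p hp) (not_lt.1 fun h => hps' (mem_filter.2 ⟨hp, h⟩))
    rw [le_antisymm (hg q hq p hp hpq.ge) (hg p hp q hq hpq.le), sub_self, zero_mul]
  have hrest : 0 ≤ ∑ p ∈ s', (g p - g q) * f p := by
    refine ih s' hs' _ (fun p hp => sub_nonneg.2 (hg p (filter_subset _ _ hp) q hq
      (hmax p (filter_subset _ _ hp)))) (fun p hp r hr hpr => sub_le_sub_right
      (hg p (filter_subset _ _ hp) r (filter_subset _ _ hr) hpr) _) fun r hr => ?_
    have hr' := mem_filter.1 hr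
    rw [filter_filter]
    convert hf r hr'.1 using 2
    exact filter_congr fun p _ => ⟨And.right, fun h => ⟨h.trans_lt hr'.2, h⟩⟩
  have hall : 0 ≤ ∑ p ∈ s, f p := by
    simpa [filter_true_of_mem hmax] using hf q hq
  calc 0 ≤ ∑ p ∈ s', (g p - g q) * f p + g q * ∑ p ∈ s, f p :=
        add_nonneg hrest (mul_nonneg (hg₀ q hq) hall)
    _ = ∑ p ∈ s, g p * f p := by
        rw [← htop, mul_sum, ← sum_add_distrib]
        exact sum_congr rfl fun p _ => by ring

variable [Fintype ι]

def SublevelSumsLe (w u : ι → ℝ) : Prop :=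
  ∀ c, ∑ p with u p ≤ c, w p ≤ ∑ p with u p ≤ c, u p

lemma SublevelSumsLe.sum_min_le {w u : ι → ℝ} (h : SublevelSumsLe w u) (γ : ℝ) :
    ∑ p, min (w p) γ ≤ ∑ p, min (u p) γ :=
  calc ∑ p, min (w p) γ
      ≤ ∑ p, (min (u p) γ + if u p ≤ γ then w p - u p else 0) := by
        refine sum_le_sum fun p _ => ?_
        split_ifs with hp
        · rw [min_eq_left hp]; linarith [min_le_left (w p) γ]
        · rw [min_eq_right (not_le.1 hp).le]; linarith [min_le_right (w p) γ]
    _ = ∑ p, min (u p) γ + (∑ p with u p ≤ γ, w p - ∑ p with u p ≤ γ, u p) := by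
        rw [sum_add_distrib, ← sum_sub_distrib, sum_filter]
    _ ≤ ∑ p, min (u p) γ := by linarith [h γ]

lemma SublevelSumsLe.not_lexGt {N : ℕ} {w u : ι → ℝ} (h : SublevelSumsLe w u) (e : ι ≃ Fin N) :
    ¬ LexGt (w ∘ e.symm) (u ∘ e.symm) := fun hlex => by
  obtain ⟨γ, hγ⟩ := exists_sum_min_lt_of_lexGt hlex
  simp only [Function.comp_apply, e.symm.sum_comp (fun p => min (u p) γ),
    e.symm.sum_comp (fun p => min (w p) γ)] at hγ
  exact (h.sum_min_le γ).not_gt hγ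

lemma prod_le_prod_of_sum_div_le_card {u w : ι → ℝ} (hu : ∀ p, 0 < u p) (hw : ∀ p, 0 < w p)
    (h : ∑ p, w p / u p ≤ Fintype.card ι) : ∏ p, w p ≤ ∏ p, u p := by
  have hexp : ∏ p, w p / u p ≤ Real.exp (∑ p, (w p / u p - 1)) := by
    rw [Real.exp_sum]
    exact prod_le_prod (fun p _ => (div_pos (hw p) (hu p)).le)
      fun p _ => by linarith [Real.add_one_le_exp (w p / u p - 1)]
  have hsum : ∑ p, (w p / u p - 1) ≤ 0 := by
    simpa [sum_sub_distrib] using h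
  rw [prod_div_distrib] at hexp
  exact (div_le_one (prod_pos fun p _ => hu p)).1 (hexp.trans (Real.exp_le_one_iff.2 hsum))

lemma SublevelSumsLe.prod_le {w u : ι → ℝ} (h : SublevelSumsLe w u) (hu : ∀ p, 0 < u p)
    (hw : ∀ p, 0 < w p) : ∏ p, w p ≤ ∏ p, u p := by
  refine prod_le_prod_of_sum_div_le_card hu hw ?_
  have := sum_mul_nonneg_of_sublevel_sums_nonneg u (fun p => 1 / u p) (fun p => u p - w p) univ
    (fun p _ => (one_div_pos.2 (hu p)).le)
    (fun p _ q _ hpq => one_div_le_one_div_of_le (hu p) hpq)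
    (fun q _ => by simpa [sum_sub_distrib] using h (u q))
  simp only [mul_sub, one_div_mul_cancel (hu _).ne', sum_sub_distrib] at this
  simpa [div_eq_inv_mul] using this

end Majorization

section ImprovingDir

variable {ι : Type*} [DecidableEq ι]

def IsImprovingDir (u Δ : ι → ℝ) : Prop :=
  ∃ a, Δ = Pi.single a 1 ∨ ∃ b, u a < u b ∧ Δ = Pi.single a 1 - Pi.single b 1

lemma IsImprovingDir.eventually_separated {u Δ : ι → ℝ} (h : IsImprovingDir u Δ) :
    ∀ᶠ ε in 𝓝[>] (0 : ℝ), ∃ a, 0 < ε ∧ (Δ = Pi.single a 1 ∨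
      ∃ b, u a + ε < u b - ε ∧ Δ = Pi.single a 1 - Pi.single b 1) := by
  obtain ⟨a, rfl | ⟨b, hab, rfl⟩⟩ := h
  · filter_upwards [self_mem_nhdsWithin] with ε hε using ⟨a, hε, Or.inl rfl⟩
  · filter_upwards [self_mem_nhdsWithin, nhdsWithin_le_nhds
      (eventually_lt_nhds (half_pos (sub_pos.2 hab)))] with ε hε hε'
    exact ⟨a, hε, Or.inr ⟨b, by linarith, rfl⟩⟩

lemma IsImprovingDir.eventually_prod_lt [Fintype ι] {u Δ : ι → ℝ} (h : IsImprovingDir u Δ)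
    (hu : ∀ p, 0 < u p) :
    ∀ᶠ ε in 𝓝[>] (0 : ℝ), (∀ p, 0 < u p + ε * Δ p) ∧ ∏ p, u p < ∏ p, (u p + ε * Δ p) := by
  filter_upwards [h.eventually_separated] with ε ⟨a, hε, hΔ⟩
  rcases hΔ with rfl | ⟨b, hab, rfl⟩
  · have hle : ∀ p, u p ≤ u p + ε * (Pi.single a 1 : ι → ℝ) p := fun p => by
      rcases eq_or_ne p a with rfl | hp <;> simp [*, hε.le]
    refine ⟨fun p => (hu p).trans_le (hle p), prod_lt_prod (fun p _ => hu p) (fun p _ => hle p)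
      ⟨a, mem_univ a, by simp [hε]⟩⟩
  · have hne : a ≠ b := by rintro rfl; linarith
    have ha : (Pi.single a 1 - Pi.single b 1 : ι → ℝ) a = 1 := by simp [hne]
    have hb : (Pi.single a 1 - Pi.single b 1 : ι → ℝ) b = -1 := by simp [hne.symm]
    have hrest : ∀ p ∈ ({a, b} : Finset ι)ᶜ, u p + ε * (Pi.single a 1 - Pi.single b 1 : ι → ℝ) p
        = u p := fun p hp => by
      simp only [mem_compl, mem_insert, mem_singleton, not_or] at hp
      simp [hp.1, hp.2]
    refine ⟨fun p => ?_, ?_⟩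
    · rcases eq_or_ne p a with rfl | hpa
      · rw [ha]; linarith [hu p]
      rcases eq_or_ne p b with rfl | hpb
      · rw [hb]; linarith [hu a]
      · simpa [hpa, hpb] using hu p
    · rw [← prod_mul_prod_compl {a, b}, ← prod_mul_prod_compl {a, b} (fun p => _ + _),
        prod_congr rfl hrest, prod_pair hne, prod_pair hne, ha, hb]
      refine mul_lt_mul_of_pos_right ?_ (prod_pos fun p _ => hu p)
      nlinarith [hu a]

lemma IsImprovingDir.eventually_lexGt {N : ℕ} {u Δ : ι → ℝ} (h : IsImprovingDir u Δ)
    (e : ι ≃ Fin N) :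
    ∀ᶠ ε in 𝓝[>] (0 : ℝ), LexGt ((fun p => u p + ε * Δ p) ∘ e.symm) (u ∘ e.symm) := by
  filter_upwards [h.eventually_separated] with ε ⟨a, hε, hΔ⟩
  refine lexGt_of_lt_of_forall_ne (e a) ?_ fun k hk => ?_
  · rcases hΔ with rfl | ⟨b, hab, rfl⟩
    · simp [hε]
    · have hne : a ≠ b := by rintro rfl; linarith
      simp [hne, hε]
  obtain ⟨p, rfl⟩ := e.surjective k
  simp only [Function.comp_apply, e.symm_apply_apply] at hk ⊢
  have hΔp : Δ p ≠ 0 := fun h0 => hk (by simp [h0])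
  rcases hΔ with rfl | ⟨b, hab, rfl⟩
  · obtain rfl : p = a := by by_contra hpa; simp [hpa] at hΔp
    simp [hε]
  · have hne : a ≠ b := by rintro rfl; linarith
    by_cases hpa : p = a
    · subst hpa; simp [hne, hε]
    obtain rfl : p = b := by by_contra hpb; simp [hpa, hpb] at hΔp
    rw [show (Pi.single a 1 - Pi.single p 1 : ι → ℝ) p = -1 by simp [Ne.symm hpa]]
    constructor <;> linarith

end ImprovingDir

section Allocation

variable {n m T : ℕ}

abbrev Alloc (n m T : ℕ) := Fin n → Fin m → Fin T → ℝ

def bundleValue (v : Fin n → Fin m → ℝ) (x : Alloc n m T) (p : Fin n × Fin T) : ℝ :=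
  ∑ j, v p.1 j * x p.1 j p.2

def util (v : Fin n → Fin m → ℝ) (d : Fin n → Fin T → ℝ) (x : Alloc n m T)
    (p : Fin n × Fin T) : ℝ :=
  bundleValue v x p - d p.1 p.2

def totalUse (x : Alloc n m T) (j : Fin m) : ℝ := ∑ t, ∑ i, x i j t

def unitAlloc (i₀ : Fin n) (j₀ : Fin m) (t₀ : Fin T) : Alloc n m T :=
  fun i j t => if i = i₀ ∧ j = j₀ ∧ t = t₀ then 1 else 0

variable (v : Fin n → Fin m → ℝ)

@[simp] lemma bundleValue_add (x y : Alloc n m T) :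
    bundleValue v (x + y) = bundleValue v x + bundleValue v y := by
  ext p; simp [bundleValue, mul_add, sum_add_distrib]

@[simp] lemma bundleValue_sub (x y : Alloc n m T) :
    bundleValue v (x - y) = bundleValue v x - bundleValue v y := by
  ext p; simp [bundleValue, mul_sub, sum_sub_distrib]

lemma util_add_smul (d : Fin n → Fin T → ℝ) (x δ : Alloc n m T) (ε : ℝ) (p : Fin n × Fin T) :
    util v d (x + ε • δ) p = util v d x p + ε * bundleValue v δ p := by
  simp only [util, bundleValue, Pi.add_apply, Pi.smul_apply, smul_eq_mul, mul_add, sum_add_distrib,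
    mul_sum, mul_left_comm ε]
  ring

lemma sum_bundleValue_eq (A : Finset (Fin n × Fin T)) (z : Alloc n m T) :
    ∑ p ∈ A, bundleValue v z p =
      ∑ q : Fin m × Fin T, ∑ i, if (i, q.2) ∈ A then v i q.1 * z i q.1 q.2 else 0 := by
  have h : ∑ p ∈ A, bundleValue v z p = ∑ p, if p ∈ A then bundleValue v z p else 0 := by
    rw [sum_ite_mem, univ_inter]
  rw [h]
  simp only [bundleValue, ite_sum_zero, Fintype.sum_prod_type]
  rw [sum_comm]
  exact (sum_congr rfl fun t _ => sum_comm).trans sum_comm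

lemma bundleValue_unitAlloc (i : Fin n) (j : Fin m) (t : Fin T) (hv : v i j = 1) :
    bundleValue v (unitAlloc i j t) = Pi.single (i, t) 1 := by
  ext ⟨i', t'⟩
  by_cases h : i' = i ∧ t' = t
  · obtain ⟨rfl, rfl⟩ := h
    simp [bundleValue, unitAlloc, hv]
  · rw [Pi.single_eq_of_ne (by simpa using h)]
    refine sum_eq_zero fun j' _ => ?_
    simp only [unitAlloc]
    rw [if_neg (by tauto), mul_zero]

@[simp] lemma totalUse_add (x y : Alloc n m T) : totalUse (x + y) = totalUse x + totalUse y := by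
  ext j; simp [totalUse, sum_add_distrib]

@[simp] lemma totalUse_sub (x y : Alloc n m T) : totalUse (x - y) = totalUse x - totalUse y := by
  ext j; simp [totalUse, sum_sub_distrib]

lemma sum_unitAlloc (i : Fin n) (j j' : Fin m) (t t' : Fin T) :
    ∑ i', unitAlloc i j t i' j' t' = if j' = j ∧ t' = t then 1 else 0 := by
  by_cases h : j' = j ∧ t' = t
  · obtain ⟨rfl, rfl⟩ := h; simp [unitAlloc]
  · simp [unitAlloc, h]

lemma totalUse_unitAlloc (i : Fin n) (j : Fin m) (t : Fin T) :
    totalUse (unitAlloc i j t) = Pi.single j 1 := by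
  ext j'
  by_cases h : j' = j
  · subst h; simp [totalUse, sum_unitAlloc]
  · simp [totalUse, sum_unitAlloc, h]

end Allocation

section Directions

variable {n m T : ℕ} (st : Fin m → Fin T → ℝ) (s : Fin m → ℝ)

/-- Small steps along `δ` respect nonnegativity and the per-period supplies at `x`. -/
def IsPeriodDir (x δ : Alloc n m T) : Prop :=
  (∀ i j t, δ i j t < 0 → 0 < x i j t) ∧ ∀ j t, 0 < ∑ i, δ i j t → ∑ i, x i j t < st j t

def IsFeasibleDir (x δ : Alloc n m T) : Prop :=
  IsPeriodDir st x δ ∧ ∀ j, 0 < totalUse δ j → totalUse x j < s j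

variable {st s} {x : Alloc n m T}

lemma IsPeriodDir.add {δ δ' : Alloc n m T} (h : IsPeriodDir st x δ) (h' : IsPeriodDir st x δ') :
    IsPeriodDir st x (δ + δ') := by
  refine ⟨fun i j t hneg => ?_, fun j t hpos => ?_⟩
  · rcases lt_or_ge (δ i j t) 0 with hδ | hδ
    · exact h.1 i j t hδ
    · exact h'.1 i j t (by simp only [Pi.add_apply] at hneg; linarith)
  · simp only [Pi.add_apply, sum_add_distrib] at hpos
    rcases lt_or_ge 0 (∑ i, δ i j t) with hδ | hδ
    · exact h.2 j t hδ
    · exact h'.2 j t (by linarith)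

lemma isPeriodDir_unitAlloc {i : Fin n} {j : Fin m} {t : Fin T} (h : ∑ i', x i' j t < st j t) :
    IsPeriodDir st x (unitAlloc i j t) := by
  refine ⟨fun i' j' t' hneg => ?_, fun j' t' hpos => ?_⟩
  · simp only [unitAlloc] at hneg; split_ifs at hneg <;> linarith
  · rw [sum_unitAlloc] at hpos
    split_ifs at hpos with hjt
    · obtain ⟨rfl, rfl⟩ := hjt; exact h
    · exact absurd hpos (lt_irrefl 0)

lemma isPeriodDir_neg_unitAlloc {i : Fin n} {j : Fin m} {t : Fin T} (h : 0 < x i j t) :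
    IsPeriodDir st x (-unitAlloc i j t) := by
  refine ⟨fun i' j' t' hneg => ?_, fun j' t' hpos => ?_⟩
  · simp only [Pi.neg_apply, unitAlloc] at hneg
    split_ifs at hneg with hijt
    · obtain ⟨rfl, rfl, rfl⟩ := hijt; exact h
    · simp at hneg
  · simp only [Pi.neg_apply, sum_neg_distrib, sum_unitAlloc] at hpos
    split_ifs at hpos <;> linarith

lemma isPeriodDir_transfer {i i' : Fin n} {j : Fin m} {t : Fin T} (h : 0 < x i j t) :
    IsPeriodDir st x (unitAlloc i' j t - unitAlloc i j t) := by
  refine ⟨fun i₀ j₀ t₀ hneg => ?_, fun j₀ t₀ hpos => ?_⟩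
  · by_cases hijt : i₀ = i ∧ j₀ = j ∧ t₀ = t
    · obtain ⟨rfl, rfl, rfl⟩ := hijt; exact h
    · simp only [Pi.sub_apply, unitAlloc, if_neg hijt, sub_zero] at hneg
      split_ifs at hneg <;> norm_num at hneg
  · simp only [Pi.sub_apply, sum_sub_distrib, sum_unitAlloc, sub_self] at hpos
    exact absurd hpos (lt_irrefl 0)

lemma eventually_add_mul_le {a b c : ℝ} (hac : a ≤ c) (hb : 0 < b → a < c) :
    ∀ᶠ ε in 𝓝[>] (0 : ℝ), a + ε * b ≤ c := by
  rcases le_or_gt b 0 with hb₀ | hb₀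
  · filter_upwards [self_mem_nhdsWithin] with ε (hε : 0 < ε)
    nlinarith
  · filter_upwards [nhdsWithin_le_nhds (eventually_lt_nhds (div_pos (sub_pos.2 (hb hb₀)) hb₀))]
      with ε hε
    rw [lt_div_iff₀ hb₀] at hε
    linarith

lemma eventually_feasibleMP_add_smul {δ : Alloc n m T} (hx : FeasibleMP n m T st s x)
    (hδ : IsFeasibleDir st s x δ) :
    ∀ᶠ ε in 𝓝[>] (0 : ℝ), FeasibleMP n m T st s (x + ε • δ) := by
  obtain ⟨hx₀, hxt, hxs⟩ := hx
  obtain ⟨⟨hδ₀, hδt⟩, hδs⟩ := hδ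
  have h₀ : ∀ i j t, ∀ᶠ ε in 𝓝[>] (0 : ℝ), 0 ≤ x i j t + ε * δ i j t := fun i j t => by
    filter_upwards [eventually_add_mul_le (a := -x i j t) (b := -δ i j t) (c := 0)
      (by linarith [hx₀ i j t]) fun h => by linarith [hδ₀ i j t (by linarith)]] with ε hε
    linarith
  have ht : ∀ j t, ∀ᶠ ε in 𝓝[>] (0 : ℝ), ∑ i, x i j t + ε * ∑ i, δ i j t ≤ st j t :=
    fun j t => eventually_add_mul_le (hxt j t) (hδt j t)
  have hs : ∀ j, ∀ᶠ ε in 𝓝[>] (0 : ℝ), totalUse x j + ε * totalUse δ j ≤ s j :=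
    fun j => eventually_add_mul_le (hxs j) (hδs j)
  filter_upwards [eventually_all.2 fun i => eventually_all.2 fun j => eventually_all.2 (h₀ i j),
    eventually_all.2 fun j => eventually_all.2 (ht j), eventually_all.2 hs] with ε h₀ ht hs
  refine ⟨h₀, fun j t => ?_, fun j => ?_⟩
  · simpa [sum_add_distrib, mul_sum] using ht j t
  · simpa [totalUse, sum_add_distrib, mul_sum] using hs j

end Directions

section Reach

variable {n m T : ℕ} (v : Fin n → Fin m → ℝ) (st : Fin m → Fin T → ℝ)

/-- Nodes are agent-periods `inl (i, t)` and items `inr j`. `Reach A (inl b)`: utility can be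
shifted from `b` to `A`; `Reach A (inr j)`: one more unit of the overall supply of `j` can be
turned into utility for `A`. -/
inductive Reach (x : Alloc n m T) (A : Finset (Fin n × Fin T)) : (Fin n × Fin T) ⊕ Fin m → Prop
  | base {p} : p ∈ A → Reach x A (.inl p)
  | transfer {i i' j t} : 0 < x i j t → v i' j = 1 → Reach x A (.inl (i', t)) →
      Reach x A (.inl (i, t))
  | release {i j t} : 0 < x i j t → Reach x A (.inr j) → Reach x A (.inl (i, t))
  | allocate {i j t} : ∑ i', x i' j t < st j t → v i j = 1 → Reach x A (.inl (i, t)) →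
      Reach x A (.inr j)

variable {v st} {x : Alloc n m T} {A : Finset (Fin n × Fin T)}

lemma Reach.exists_periodDir (hsupp : ∀ i j t, x i j t ≠ 0 → v i j = 1) {node}
    (h : Reach v st x A node) :
    ∃ a ∈ A, ∃ δ, IsPeriodDir st x δ ∧
      totalUse δ ≤ node.elim (fun _ => 0) (fun j => Pi.single j (1 : ℝ)) ∧
      bundleValue v δ = Pi.single a 1 - node.elim (fun b => Pi.single b 1) (fun _ => 0) := by
  induction h with
  | base hp =>
    refine ⟨_, hp, 0, ⟨fun _ _ _ h => absurd h (lt_irrefl 0), fun _ _ h => ?_⟩, ?_, ?_⟩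
    · simp at h
    · exact fun j => by simp [totalUse]
    · ext q; simp [bundleValue]
  | @transfer i i' j t hx hv' _ ih =>
    obtain ⟨a, ha, δ, hδ, htot, hval⟩ := ih
    refine ⟨a, ha, δ + (unitAlloc i' j t - unitAlloc i j t), hδ.add (isPeriodDir_transfer hx),
      ?_, ?_⟩
    · simpa [totalUse_unitAlloc] using htot
    · simp [hval, bundleValue_unitAlloc v _ _ _ hv',
        bundleValue_unitAlloc v _ _ _ (hsupp _ _ _ hx.ne')]
  | @release i j t hx _ ih =>
    obtain ⟨a, ha, δ, hδ, htot, hval⟩ := ih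
    refine ⟨a, ha, δ - unitAlloc i j t, ?_, ?_, ?_⟩
    · rw [sub_eq_add_neg]; exact hδ.add (isPeriodDir_neg_unitAlloc hx)
    · simpa [totalUse_unitAlloc] using htot
    · simp [hval, bundleValue_unitAlloc v _ _ _ (hsupp _ _ _ hx.ne')]
  | @allocate i j t hslack hv' _ ih =>
    obtain ⟨a, ha, δ, hδ, htot, hval⟩ := ih
    refine ⟨a, ha, δ + unitAlloc i j t, hδ.add (isPeriodDir_unitAlloc hslack), ?_, ?_⟩
    · simpa [totalUse_unitAlloc] using htot
    · simp [hval, bundleValue_unitAlloc v _ _ _ hv']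

end Reach

section Cut

variable {n m T : ℕ} {v : Fin n → Fin m → ℝ} {st : Fin m → Fin T → ℝ} {s : Fin m → ℝ}

/-- A min-cut bound: `A` can only gain utility through the item-periods of reachable items and
those valued by a member of `A`; closedness makes `x` spend all of them on `A`, up to the full
per-period or overall supply. -/
lemma sum_util_le_of_reach_closed (hv : ∀ i j, v i j = 0 ∨ v i j = 1)
    {x : Alloc n m T} (hx : FeasibleMP n m T st s x) (hsupp : ∀ i j t, x i j t ≠ 0 → v i j = 1)
    {A : Finset (Fin n × Fin T)} (hA : ∀ p, Reach v st x A (.inl p) → p ∈ A)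
    (hR : ∀ j, Reach v st x A (.inr j) → s j ≤ totalUse x j)
    (d : Fin n → Fin T → ℝ) {y : Alloc n m T} (hy : FeasibleMP n m T st s y) :
    ∑ p ∈ A, util v d y p ≤ ∑ p ∈ A, util v d x p := by
  classical
  set R := univ.filter fun j => Reach v st x A (.inr j)
  set F := univ.filter fun q : Fin m × Fin T => q.1 ∉ R ∧ ∃ i, v i q.1 = 1 ∧ (i, q.2) ∈ A
  have hdisj : Disjoint (R ×ˢ univ) F :=
    disjoint_left.2 fun q hq hqF => (mem_filter.1 hqF).2.1 (mem_product.1 hq).1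
  have hx_owned : ∀ q ∈ R ×ˢ univ ∪ F, ∀ i,
      (if (i, q.2) ∈ A then v i q.1 * x i q.1 q.2 else 0) = x i q.1 q.2 := by
    intro q hq i
    rcases (hx.1 i q.1 q.2).eq_or_lt with h0 | hpos
    · simp [← h0]
    have hreach : Reach v st x A (.inl (i, q.2)) := by
      rcases mem_union.1 hq with hq | hq
      · exact .release hpos (mem_filter.1 (mem_product.1 hq).1).2
      · obtain ⟨i', hv', hA'⟩ := (mem_filter.1 hq).2.2
        exact .transfer hpos hv' (.base hA')
    rw [if_pos (hA _ hreach), hsupp _ _ _ hpos.ne', one_mul]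
  have hy_outside : ∀ q ∉ R ×ˢ univ ∪ F, ∀ i,
      (if (i, q.2) ∈ A then v i q.1 * y i q.1 q.2 else 0) = 0 := by
    intro q hq i
    split_ifs with hiA
    · rcases hv i q.1 with h0 | h1
      · rw [h0, zero_mul]
      · refine absurd (mem_union_right _ (mem_filter.2 ⟨mem_univ _, fun hqR => ?_, i, h1, hiA⟩)) hq
        exact hq (mem_union_left _ (mem_product.2 ⟨hqR, mem_univ _⟩))
    · rfl
  have hyle : ∀ q : Fin m × Fin T, ∀ i,
      (if (i, q.2) ∈ A then v i q.1 * y i q.1 q.2 else 0) ≤ y i q.1 q.2 := by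
    intro q i
    split_ifs
    · rcases hv i q.1 with h | h <;> simp [h, hy.1 i q.1 q.2]
    · exact hy.1 i q.1 q.2
  have hcap : ∑ q ∈ R ×ˢ univ ∪ F, ∑ i, y i q.1 q.2 ≤ ∑ q ∈ R ×ˢ univ ∪ F, ∑ i, x i q.1 q.2 := by
    rw [sum_union hdisj, sum_union hdisj, sum_product, sum_product]
    refine add_le_add (sum_le_sum fun j hj => (hy.2.2 j).trans (hR j (mem_filter.1 hj).2))
      (sum_le_sum fun q hq => (hy.2.1 q.1 q.2).trans (not_lt.1 fun hslack => ?_))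
    obtain ⟨hqR, i, hv', hA'⟩ := (mem_filter.1 hq).2
    exact hqR (mem_filter.2 ⟨mem_univ _, .allocate hslack hv' (.base hA')⟩)
  have hbundle : ∑ p ∈ A, bundleValue v y p ≤ ∑ p ∈ A, bundleValue v x p := by
    rw [sum_bundleValue_eq, sum_bundleValue_eq]
    calc _ = ∑ q ∈ R ×ˢ univ ∪ F, ∑ i, if (i, q.2) ∈ A then v i q.1 * y i q.1 q.2 else 0 :=
          (sum_subset (subset_univ _) fun q _ hq => sum_eq_zero fun i _ => hy_outside q hq i).symm
      _ ≤ ∑ q ∈ R ×ˢ univ ∪ F, ∑ i, y i q.1 q.2 :=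
          sum_le_sum fun q _ => sum_le_sum fun i _ => hyle q i
      _ ≤ ∑ q ∈ R ×ˢ univ ∪ F, ∑ i, x i q.1 q.2 := hcap
      _ = ∑ q ∈ R ×ˢ univ ∪ F, ∑ i, if (i, q.2) ∈ A then v i q.1 * x i q.1 q.2 else 0 :=
          sum_congr rfl fun q hq => sum_congr rfl fun i _ => (hx_owned q hq i).symm
      _ ≤ _ := sum_le_univ_sum_of_nonneg fun q => sum_nonneg fun i _ => by
          split_ifs
          · rcases hv i q.1 with h | h <;> simp [h, hx.1 i q.1 q.2]
          · exact le_rfl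
  simp only [util, sum_sub_distrib]
  linarith

end Cut

section Optimality

variable {n m T : ℕ} (v : Fin n → Fin m → ℝ) (d : Fin n → Fin T → ℝ)
  (st : Fin m → Fin T → ℝ) (s : Fin m → ℝ)

def HasImprovingDir (x : Alloc n m T) : Prop :=
  ∃ δ, IsFeasibleDir st s x δ ∧ IsImprovingDir (util v d x) (bundleValue v δ)

variable {v d st s}

lemma sublevelSumsLe_of_not_hasImprovingDir (hv : ∀ i j, v i j = 0 ∨ v i j = 1)
    {x : Alloc n m T} (hx : FeasibleMP n m T st s x) (hsupp : ∀ i j t, x i j t ≠ 0 → v i j = 1)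
    (h : ¬ HasImprovingDir v d st s x) {y : Alloc n m T} (hy : FeasibleMP n m T st s y) :
    SublevelSumsLe (util v d y) (util v d x) := by
  intro c
  refine sum_util_le_of_reach_closed hv hx hsupp (fun b hb => ?_) (fun j hj => ?_) d hy
  · by_contra hbA
    obtain ⟨a, ha, δ, hδ, htot, hval⟩ := hb.exists_periodDir hsupp
    refine h ⟨δ, ⟨hδ, fun j hj => absurd (htot j) (by simpa using hj)⟩, a, Or.inr ⟨b, ?_, hval⟩⟩
    simp only [mem_filter, mem_univ, true_and, not_le] at ha hbA
    exact ha.trans_lt hbA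
  · by_contra! hslack
    obtain ⟨a, -, δ, hδ, htot, hval⟩ := hj.exists_periodDir hsupp
    refine h ⟨δ, ⟨hδ, fun j' hj' => ?_⟩, a, Or.inl (by simpa using hval)⟩
    obtain rfl : j' = j := by
      by_contra hne
      exact absurd (htot j') (by simpa [Pi.single_apply, hne] using hj')
    exact hslack

lemma not_hasImprovingDir_of_forall_prod_le {x : Alloc n m T} (hx : FeasibleMP n m T st s x)
    (hu : ∀ p, 0 < util v d x p)
    (hmax : ∀ y, FeasibleMP n m T st s y → (∀ p, 0 < util v d y p) →
      ∏ p, util v d y p ≤ ∏ p, util v d x p) :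
    ¬ HasImprovingDir v d st s x := by
  rintro ⟨δ, hδ, hΔ⟩
  obtain ⟨ε, hfeas, hpos, hlt⟩ :=
    ((eventually_feasibleMP_add_smul hx hδ).and (hΔ.eventually_prod_lt hu)).exists
  simp only [← util_add_smul] at hpos hlt
  exact (hmax _ hfeas hpos).not_gt hlt

lemma not_hasImprovingDir_of_not_lexGt {x : Alloc n m T} (hx : FeasibleMP n m T st s x)
    (hlex : ¬ ∃ y, FeasibleMP n m T st s y ∧
      LexGt (perPeriodUtilVec n m T v d y) (perPeriodUtilVec n m T v d x)) :
    ¬ HasImprovingDir v d st s x := by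
  rintro ⟨δ, hδ, hΔ⟩
  obtain ⟨ε, hfeas, hgt⟩ :=
    ((eventually_feasibleMP_add_smul hx hδ).and (hΔ.eventually_lexGt finProdFinEquiv)).exists
  refine hlex ⟨_, hfeas, ?_⟩
  rwa [← funext (util_add_smul v d x δ ε)] at hgt

end Optimality

section Support

variable {n m T : ℕ} {v : Fin n → Fin m → ℝ}

lemma mul_valuation_le (hv : ∀ i j, v i j = 0 ∨ v i j = 1) {x : Alloc n m T}
    (hx : ∀ i j t, 0 ≤ x i j t) (i j t) : v i j * x i j t ≤ x i j t := by
  rcases hv i j with h | h <;> simp [h, hx i j t]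

lemma feasibleMP_mul_valuation (hv : ∀ i j, v i j = 0 ∨ v i j = 1) {st : Fin m → Fin T → ℝ}
    {s : Fin m → ℝ} {x : Alloc n m T} (hx : FeasibleMP n m T st s x) :
    FeasibleMP n m T st s fun i j t => v i j * x i j t :=
  ⟨fun i j t => by rcases hv i j with h | h <;> simp [h, hx.1 i j t],
    fun j t => (sum_le_sum fun i _ => mul_valuation_le hv hx.1 i j t).trans (hx.2.1 j t),
    fun j => (sum_le_sum fun t _ => sum_le_sum fun i _ => mul_valuation_le hv hx.1 i j t).trans
      (hx.2.2 j)⟩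

lemma util_mul_valuation (hv : ∀ i j, v i j = 0 ∨ v i j = 1) (d : Fin n → Fin T → ℝ)
    (x : Alloc n m T) :
    util v d (fun i j t => v i j * x i j t) = util v d x := by
  ext p
  refine congrArg (· - _) (sum_congr rfl fun j _ => ?_)
  rcases hv p.1 j with h | h <;> simp [h]

end Support

end MultiPeriod

open MultiPeriod

theorem geo_mean_mnw_iff_leximin_general
    (n m T : ℕ)
    (v : Fin n → Fin m → ℝ) (d : Fin n → Fin T → ℝ)
    (st : Fin m → Fin T → ℝ) (s : Fin m → ℝ)
    (hv : ∀ i j, v i j = 0 ∨ v i j = 1)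
    (x : Fin n → Fin m → Fin T → ℝ) (hxf : FeasibleMP n m T st s x)
    (hupos : ∀ i t, 0 < (∑ j, v i j * x i j t) - d i t) :
    (∀ y, FeasibleMP n m T st s y →
      (∀ i t, 0 < (∑ j, v i j * y i j t) - d i t) →
      ∏ i, ∏ t, ((∑ j, v i j * y i j t) - d i t)
        ≤ ∏ i, ∏ t, ((∑ j, v i j * x i j t) - d i t))
    ↔
    (¬ ∃ y, FeasibleMP n m T st s y ∧
        LexGt (perPeriodUtilVec n m T v d y) (perPeriodUtilVec n m T v d x)) := by
  -- Discarding the bundles of zero value changes no utility and makes `x` supported on `v = 1`.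
  set x' : Alloc n m T := fun i j t => v i j * x i j t
  have hx' : FeasibleMP n m T st s x' := feasibleMP_mul_valuation hv hxf
  have hutil : util v d x' = util v d x := util_mul_valuation hv d x
  have hsupp : ∀ i j t, x' i j t ≠ 0 → v i j = 1 := fun i j t h =>
    (hv i j).resolve_left fun h0 => h (by simp [x', h0])
  have hsublevel (h : ¬ HasImprovingDir v d st s x') {y} (hy : FeasibleMP n m T st s y) :
      SublevelSumsLe (util v d y) (util v d x) :=
    hutil ▸ sublevelSumsLe_of_not_hasImprovingDir hv hx' hsupp h hy
  have hpos : ∀ p, 0 < util v d x p := fun p => hupos p.1 p.2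
  have hprod (y : Alloc n m T) :
      ∏ i, ∏ t, ((∑ j, v i j * y i j t) - d i t) = ∏ p, util v d y p :=
    (Fintype.prod_prod_type (util v d y)).symm
  simp only [hprod]
  constructor
  · rintro hmax ⟨y, hy, hlex⟩
    refine (hsublevel ?_ hy).not_lexGt finProdFinEquiv hlex
    refine not_hasImprovingDir_of_forall_prod_le hx' (hutil ▸ hpos) fun y hy hypos => ?_
    rw [hutil]
    exact hmax y hy fun i t => hypos (i, t)
  · intro hlex y hy hypos
    have hvec : perPeriodUtilVec n m T v d x' = perPeriodUtilVec n m T v d x :=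
      congrArg (· ∘ finProdFinEquiv.symm) hutil
    refine (hsublevel ?_ hy).prod_le hpos fun p => hypos p.1 p.2
    exact not_hasImprovingDir_of_not_lexGt hx' (hvec ▸ hlex)

/-- In the multi-period geometric-mean-utility model with per-period demands,
binary valuations and unit budgets, under the assumption that some feasible
allocation gives every buyer strictly positive per-period utilities, a feasible
allocation with positive per-period utilities maximizes
`∏ i, ∏ t, u i t` (equivalently, the EG-Time-geo-mean program) iff it is
leximin-optimal with respect to the vector of per-buyer-per-period
utilities. -/
theorem geo_mean_mnw_iff_leximin
    (n m T : ℕ) (hT : 0 < T)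
    (v : Fin n → Fin m → ℝ) (d : Fin n → Fin T → ℝ)
    (st : Fin m → Fin T → ℝ) (s : Fin m → ℝ)
    (hv : ∀ i j, v i j = 0 ∨ v i j = 1) (hd : ∀ i t, 0 ≤ d i t)
    (hexist : ∃ y, FeasibleMP n m T st s y ∧
      ∀ i t, 0 < (∑ j, v i j * y i j t) - d i t)
    (x : Fin n → Fin m → Fin T → ℝ) (hxf : FeasibleMP n m T st s x)
    (hupos : ∀ i t, 0 < (∑ j, v i j * x i j t) - d i t) :
    (∀ y, FeasibleMP n m T st s y →
      (∀ i t, 0 < (∑ j, v i j * y i j t) - d i t) →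
      ∏ i, ∏ t, ((∑ j, v i j * y i j t) - d i t)
        ≤ ∏ i, ∏ t, ((∑ j, v i j * x i j t) - d i t))
    ↔
    (¬ ∃ y, FeasibleMP n m T st s y ∧
        LexGt (perPeriodUtilVec n m T v d y) (perPeriodUtilVec n m T v d x)) :=
  geo_mean_mnw_iff_leximin_general n m T v d st s hv x hxf hupos
end
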